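/- arXiv:1408.5391 — 3 statements merged into one kernel-verified Lean document; each statement's English description precedes it below -/
import Mathlib

section
/- For every integer n ≥ 1, the number of order ideals of the two-color tetrahedral poset T_n({b,g}) equals the product of the first n Catalan numbers: |J(T_n({b,g}))| = ∏_{j=1}^{n} C_j, where C_j = (1/(j+1))·binomial(2j,j). -/
open scoped Classical

noncomputable section

/-- `V3 n` is the set `{(a,b,c) ∈ ℤ≥0³ : a + b + c ≤ n - 2}`. -/
def V3 (n : ℕ) : Finset (ℤ × ℤ × ℤ) :=
  ((Finset.Icc (0:ℤ) (n:ℤ) ×ˢ Finset.Icc (0:ℤ) (n:ℤ) ×ˢ Finset.Icc (0:ℤ) (n:ℤ)).filter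
    (fun p => p.1 + p.2.1 + p.2.2 ≤ (n:ℤ) - 2))

/-- The six edge vectors. -/
def vr : ℤ × ℤ × ℤ := (1,0,0)
def vg : ℤ × ℤ × ℤ := (0,1,0)
def vy : ℤ × ℤ × ℤ := (0,0,1)
def vb : ℤ × ℤ × ℤ := (-1,1,0)
def vo : ℤ × ℤ × ℤ := (-1,0,1)
def vs : ℤ × ℤ × ℤ := (0,1,-1)

/-- One step: add a vector of `S`, staying inside `W`. -/
def step3 (S : Set (ℤ × ℤ × ℤ)) (W : Finset (ℤ × ℤ × ℤ)) (u v : ℤ × ℤ × ℤ) : Prop :=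
  u ∈ W ∧ v ∈ W ∧ ∃ e ∈ S, v = u + e

/-- The order relation of `T_n(S)`: reflexive-transitive closure of `step3`,
restricted to `W`. -/
def le3 (S : Set (ℤ × ℤ × ℤ)) (W : Finset (ℤ × ℤ × ℤ)) (u v : ℤ × ℤ × ℤ) : Prop :=
  u ∈ W ∧ v ∈ W ∧ Relation.ReflTransGen (step3 S W) u v

/-- An order ideal: a downward closed subset of `W`. -/
def IsIdeal3 (S : Set (ℤ × ℤ × ℤ)) (W : Finset (ℤ × ℤ × ℤ))
    (I : Finset (ℤ × ℤ × ℤ)) : Prop :=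
  I ⊆ W ∧ ∀ u v : ℤ × ℤ × ℤ, le3 S W u v → v ∈ I → u ∈ I

/-- The set of all order ideals of `T_n(S)`. -/
def ideals3 (S : Set (ℤ × ℤ × ℤ)) (W : Finset (ℤ × ℤ × ℤ)) :
    Finset (Finset (ℤ × ℤ × ℤ)) :=
  W.powerset.filter (fun I => IsIdeal3 S W I)

/-- The rank generating function `F(J(T_n(S)),q) = Σ_{I} q^{|I|}`. -/
def genF3 (S : Set (ℤ × ℤ × ℤ)) (W : Finset (ℤ × ℤ × ℤ)) : Polynomial ℤ :=
  ∑ I ∈ ideals3 S W, Polynomial.X ^ I.card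

end


/-- Finset of "admissible" lists of length `t` with previous value `p`:
each entry is at most the previous entry plus one. -/
def Ase : ℕ → ℕ → Finset (List ℕ)
  | 0, _ => {[]}
  | (t+1), p => (Finset.range (p+2)).biUnion fun k => (Ase t k).image (List.cons k)

lemma mem_Ase {t p : ℕ} {l : List ℕ} :
    l ∈ Ase t p ↔ l.length = t ∧ List.Chain (fun x y => y ≤ x + 1) p l := by
  induction t generalizing p l with
  | zero =>
    simp only [Ase, Finset.mem_singleton]
    constructor
    · rintro rfl; simp; exact List.Chain.nil
    · rintro ⟨h, -⟩; exact List.eq_nil_of_length_eq_zero h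
  | succ t ih =>
    simp only [Ase, Finset.mem_biUnion, Finset.mem_range, Finset.mem_image]
    constructor
    · rintro ⟨k, hk, l', hl', rfl⟩
      obtain ⟨hlen, hchain⟩ := ih.1 hl'
      exact ⟨by simp [hlen], List.Chain.cons (by omega) hchain⟩
    · rintro ⟨hlen, hchain⟩
      cases l with
      | nil => simp at hlen
      | cons k l' =>
        simp only [List.Chain, List.chain_cons] at hchain
        exact ⟨k, by omega, l', ih.2 ⟨by simpa using hlen, hchain.2⟩, rfl⟩

lemma card_Ase_succ (t p : ℕ) :
    (Ase (t+1) p).card = ∑ k ∈ Finset.range (p+2), (Ase t k).card := by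
  rw [show Ase (t+1) p = (Finset.range (p+2)).biUnion fun k => (Ase t k).image (List.cons k) from rfl]
  rw [Finset.card_biUnion]
  · refine Finset.sum_congr rfl fun k _ => ?_
    exact Finset.card_image_of_injective _ (fun a b h => by simpa using h)
  · intro x _ y _ hxy
    simp only [Finset.disjoint_left, Finset.mem_image]
    rintro l ⟨l1, -, rfl⟩ ⟨l2, -, h⟩
    exact hxy (by simpa using (List.cons_eq_cons.1 h).1.symm)

lemma choose_step {n r : ℕ} (h : 2*r + 1 ≤ n) : n.choose r ≤ n.choose (r+1) := by
  have key := Nat.choose_succ_right_eq n r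
  have h1 : n.choose r * (r+1) ≤ n.choose r * (n - r) :=
    Nat.mul_le_mul_left _ (by omega)
  rw [← key] at h1
  exact Nat.le_of_mul_le_mul_right h1 (by omega)

lemma choose_le_half {n r s : ℕ} (hrs : r ≤ s) (hs : 2*s ≤ n + 1) :
    n.choose r ≤ n.choose s := by
  induction s with
  | zero => interval_cases r; exact le_rfl
  | succ s ih =>
    rcases Nat.eq_or_lt_of_le hrs with rfl | h
    · exact le_rfl
    · exact le_trans (ih (by omega) (by omega)) (choose_step (by omega))

lemma sum_range_choose_shift (a r q : ℕ) :
    ∑ k ∈ Finset.range q, (a+k).choose r + a.choose (r+1) = (a+q).choose (r+1) := by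
  induction q with
  | zero => simp
  | succ q ih =>
    rw [Finset.sum_range_succ, show a + (q+1) = (a+q) + 1 from rfl,
      Nat.choose_succ_succ' (a+q) r]
    omega

lemma sub_ok (t k : ℕ) : (2*t+k).choose (t+k+2) ≤ (2*t+k).choose t := by
  rcases Nat.lt_or_ge t 2 with h | h
  · rw [Nat.choose_eq_zero_of_lt (by omega)]; exact Nat.zero_le _
  · have hsymm : (2*t+k).choose (2*t+k - (t+k+2)) = (2*t+k).choose (t+k+2) :=
      Nat.choose_symm (by omega)
    rw [show 2*t+k - (t+k+2) = t-2 by omega] at hsymm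
    rw [← hsymm]
    exact choose_le_half (by omega) (by omega)

lemma card_Ase (t p : ℕ) :
    (Ase t p).card + (2*t+p).choose (t+p+2) = (2*t+p).choose t := by
  induction t generalizing p with
  | zero =>
    show ({[]} : Finset (List ℕ)).card + _ = _
    rw [Nat.choose_eq_zero_of_lt (by omega)]
    simp
  | succ t ih =>
    rw [card_Ase_succ]
    have h1 : ∑ k ∈ Finset.range (p+2), (Ase t k).card
        + ∑ k ∈ Finset.range (p+2), (2*t+k).choose (t+k+2)
        = ∑ k ∈ Finset.range (p+2), (2*t+k).choose t := by
      rw [← Finset.sum_add_distrib]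
      exact Finset.sum_congr rfl fun k _ => ih k
    have h2 : ∑ k ∈ Finset.range (p+2), (2*t+k).choose t + (2*t).choose (t+1)
        = (2*t+(p+2)).choose (t+1) := sum_range_choose_shift (2*t) t (p+2)
    rcases Nat.lt_or_ge t 2 with ht | ht
    · interval_cases t
      · -- t = 0
        have hz : (2*(0+1)+p).choose ((0+1)+p+2) = 0 := Nat.choose_eq_zero_of_lt (by omega)
        have ho : (2*(0+1)+p).choose (0+1) = 2*(0+1)+p := Nat.choose_one_right _
        have hc : ∑ k ∈ Finset.range (p+2), (Ase 0 k).card = p+2 := by simp [Ase]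
        omega
      · -- t = 1
        have hz : ∀ k ∈ Finset.range (p+2), (2*1+k).choose (1+k+2) = 0 :=
          fun k _ => Nat.choose_eq_zero_of_lt (by omega)
        rw [Finset.sum_eq_zero hz] at h1
        have hc : (2*(1+1)+p).choose ((1+1)+p+2) = 1 := by
          rw [show (1+1)+p+2 = 2*(1+1)+p by omega]
          exact Nat.choose_self _
        rw [hc]
        have h2' : (2*1+(p+2)).choose (1+1) = (2*(1+1)+p).choose (1+1) := by
          congr 1; omega
        have hcc : (2*1).choose (1+1) = 1 := by norm_num
        omega
    · -- t ≥ 2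
      have hsym : ∀ k ∈ Finset.range (p+2),
          (2*t+k).choose (t+k+2) = (2*t+k).choose (t-2) := by
        intro k _
        rw [← Nat.choose_symm (show t+k+2 ≤ 2*t+k by omega)]
        congr 1; omega
      rw [Finset.sum_congr rfl hsym] at h1
      have h3 : ∑ k ∈ Finset.range (p+2), (2*t+k).choose (t-2) + (2*t).choose (t-2+1)
          = (2*t+(p+2)).choose (t-2+1) := sum_range_choose_shift (2*t) (t-2) (p+2)
      have e1 : (2*t).choose (t+1) = (2*t).choose (t-2+1) := by
        rw [← Nat.choose_symm (show t+1 ≤ 2*t by omega)]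
        congr 1; omega
      have e2 : (2*(t+1)+p).choose ((t+1)+p+2) = (2*t+(p+2)).choose (t-2+1) := by
        rw [← Nat.choose_symm (show (t+1)+p+2 ≤ 2*(t+1)+p by omega)]
        congr 1 <;> omega
      have e3 : (2*(t+1)+p).choose (t+1) = (2*t+(p+2)).choose (t+1) := by
        congr 1; omega
      omega

lemma card_Ase_zero (t : ℕ) : (Ase t 0).card = catalan (t+1) := by
  have hmain := card_Ase t 0
  rw [Nat.add_zero, Nat.add_zero] at hmain
  -- suffices : catalan (t+1) + (2*t).choose (t+2) = (2*t).choose t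
  suffices h : catalan (t+1) + (2*t).choose (t+2) = (2*t).choose t by omega
  rcases Nat.eq_zero_or_pos t with rfl | ht
  · simp [catalan_one]
  · have f1 : (2*t).choose (t+1) * (t+1) = (2*t).choose t * t := by
      have := Nat.choose_succ_right_eq (2*t) t
      rwa [show 2*t - t = t by omega] at this
    have f2 : (2*t).choose (t+2) * (t+2) = (2*t).choose (t+1) * (t-1) := by
      have := Nat.choose_succ_right_eq (2*t) (t+1)
      rwa [show 2*t - (t+1) = t-1 by omega] at this
    have f3 : (t+2) * catalan (t+1) = (2*(t+1)).choose (t+1) := by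
      have := succ_mul_catalan_eq_centralBinom (t+1)
      rwa [Nat.centralBinom] at this
    have f6 : (2*t+1).choose t = (2*t+1).choose (t+1) := by
      rw [← Nat.choose_symm (show t+1 ≤ 2*t+1 by omega)]
      congr 1 <;> omega
    have f45 : (2*(t+1)).choose (t+1) = 2 * ((2*t).choose t + (2*t).choose (t+1)) := by
      rw [show 2*(t+1) = (2*t+1)+1 by omega, Nat.choose_succ_succ (2*t+1) t, ← f6,
        show (2*t+1) = 2*t + 1 from rfl]
      rw [Nat.choose_succ_succ (2*t) t] at f6
      have : (2*t+1).choose t = (2*t).choose t + (2*t).choose (t+1) := by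
        rw [f6]
      omega
    -- pass to ℤ
    have E1 : ((2*t).choose (t+1) : ℤ) * ((t:ℤ)+1) = ((2*t).choose t : ℤ) * t := by
      exact_mod_cast congrArg (Nat.cast : ℕ → ℤ) f1
    have E2 : ((2*t).choose (t+2) : ℤ) * ((t:ℤ)+2) = ((2*t).choose (t+1) : ℤ) * ((t:ℤ)-1) := by
      have := congrArg (Nat.cast : ℕ → ℤ) f2
      push_cast [Nat.cast_sub ht] at this
      linarith [this]
    have E3 : ((t:ℤ)+2) * (catalan (t+1) : ℤ)
        = 2 * ((2*t).choose t : ℤ) + 2 * ((2*t).choose (t+1) : ℤ) := by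
      have := congrArg (Nat.cast : ℕ → ℤ) (f3.trans f45)
      push_cast at this
      linarith [this]
    have key : ((t:ℤ)+1) * (((t:ℤ)+2) * ((catalan (t+1) : ℤ) + ((2*t).choose (t+2) : ℤ)))
        = ((t:ℤ)+1) * (((t:ℤ)+2) * ((2*t).choose t : ℤ)) := by
      linear_combination ((t:ℤ)+1)*E1 + ((t:ℤ)+1)*E2 + ((t:ℤ)+1)*E3
    have h1 : ((t:ℤ)+1) ≠ 0 := by positivity
    have h2 : ((t:ℤ)+2) ≠ 0 := by positivity
    have := mul_left_cancel₀ h2 (mul_left_cancel₀ h1 key)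
    exact_mod_cast this


section PosetAux

open Finset

lemma isIdeal_iff {S : Set (ℤ×ℤ×ℤ)} {W : Finset (ℤ×ℤ×ℤ)} {I : Finset (ℤ×ℤ×ℤ)} :
    IsIdeal3 S W I ↔ I ⊆ W ∧ ∀ u v, step3 S W u v → v ∈ I → u ∈ I := by
  constructor
  · rintro ⟨hsub, hcl⟩
    exact ⟨hsub, fun u v hstep hv =>
      hcl u v ⟨hstep.1, hstep.2.1, Relation.ReflTransGen.single hstep⟩ hv⟩
  · rintro ⟨hsub, hcl⟩
    refine ⟨hsub, fun u v hle hv => ?_⟩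
    obtain ⟨hu, hv', hrtc⟩ := hle
    clear hu
    induction hrtc using Relation.ReflTransGen.head_induction_on with
    | refl => exact hv
    | head hstep _ ih => exact hcl _ _ hstep ih

lemma isIdeal_bg_iff {W : Finset (ℤ×ℤ×ℤ)} {I : Finset (ℤ×ℤ×ℤ)} :
    IsIdeal3 {vb, vg} W I ↔ I ⊆ W ∧
      (∀ p ∈ W, p + vb ∈ I → p ∈ I) ∧ (∀ p ∈ W, p + vg ∈ I → p ∈ I) := by
  rw [isIdeal_iff]
  constructor
  · rintro ⟨hsub, hcl⟩
    refine ⟨hsub, fun p hp hmem => ?_, fun p hp hmem => ?_⟩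
    · exact hcl p (p + vb) ⟨hp, hsub hmem, vb, Or.inl rfl, rfl⟩ hmem
    · exact hcl p (p + vg) ⟨hp, hsub hmem, vg, Or.inr rfl, rfl⟩ hmem
  · rintro ⟨hsub, hb, hg⟩
    refine ⟨hsub, fun u v hstep hv => ?_⟩
    obtain ⟨hu, hvW, e, he, rfl⟩ := hstep
    rcases he with rfl | rfl
    · exact hb u hu hv
    · exact hg u hu hv

lemma mem_V3 {n : ℕ} {p : ℤ×ℤ×ℤ} :
    p ∈ V3 n ↔ 0 ≤ p.1 ∧ 0 ≤ p.2.1 ∧ 0 ≤ p.2.2 ∧ p.1 + p.2.1 + p.2.2 ≤ (n:ℤ) - 2 := by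
  simp only [V3, mem_filter, mem_product, mem_Icc]
  omega

/-- The `c = 0` slice of `V3 n`. -/
noncomputable def Wt (n : ℕ) : Finset (ℤ×ℤ×ℤ) := (V3 n).filter (fun p => p.2.2 = 0)

lemma mem_Wt {n : ℕ} {p : ℤ×ℤ×ℤ} :
    p ∈ Wt n ↔ 0 ≤ p.1 ∧ 0 ≤ p.2.1 ∧ p.2.2 = 0 ∧ p.1 + p.2.1 ≤ (n:ℤ) - 2 := by
  simp only [Wt, mem_filter, mem_V3]
  omega

lemma mem_Wt' {n : ℕ} {a b c : ℤ} :
    (a, b, c) ∈ Wt n ↔ 0 ≤ a ∧ 0 ≤ b ∧ c = 0 ∧ a + b ≤ (n:ℤ) - 2 := mem_Wt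

lemma eta_Wt {n : ℕ} {p : ℤ×ℤ×ℤ} (hp : p ∈ Wt n) : p = (p.1, p.2.1, (0:ℤ)) := by
  obtain ⟨a, b, c⟩ := p
  obtain ⟨-, -, rfl, -⟩ := mem_Wt.1 hp
  rfl

end PosetAux


section ColAux

open Finset

/-- Number of elements of `I` in the column with first coordinate `a`. -/
def colN (I : Finset (ℤ×ℤ×ℤ)) (a : ℤ) : ℕ := (I.filter (fun p => p.1 = a)).card

/-- A nonempty downward-closed finite set of nonnegative integers is `Ico 0 card`. -/
lemma int_initseg {B : Finset ℤ} (h0 : ∀ b ∈ B, 0 ≤ b)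
    (hdc : ∀ b ∈ B, ∀ b', 0 ≤ b' → b' ≤ b → b' ∈ B) :
    ∀ b : ℤ, b ∈ B ↔ 0 ≤ b ∧ b < B.card := by
  have hsub : B ⊆ Finset.Ico (0:ℤ) (B.card : ℤ) := by
    intro b hb
    rw [Finset.mem_Ico]
    refine ⟨h0 b hb, ?_⟩
    have hIcc : Finset.Icc (0:ℤ) b ⊆ B := fun x hx => by
      rw [Finset.mem_Icc] at hx; exact hdc b hb x hx.1 hx.2
    have := Finset.card_le_card hIcc
    rw [Int.card_Icc] at this
    omega
  have hcard : (Finset.Ico (0:ℤ) (B.card : ℤ)).card = B.card := by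
    rw [Int.card_Ico]; omega
  have heq : B = Finset.Ico (0:ℤ) (B.card : ℤ) :=
    Finset.eq_of_subset_of_card_le hsub (by omega)
  intro b
  constructor
  · intro hb
    have := Finset.mem_Ico.1 (hsub hb)
    exact ⟨this.1, this.2⟩
  · intro hb
    have hmem : b ∈ Finset.Ico (0:ℤ) (B.card : ℤ) := Finset.mem_Ico.2 ⟨hb.1, hb.2⟩
    rwa [← heq] at hmem

variable {n : ℕ} {I : Finset (ℤ×ℤ×ℤ)} (hI : IsIdeal3 {vb, vg} (Wt n) I)

include hI

lemma col_down {a b b' : ℤ} (h : (a, b, 0) ∈ I) (h0 : 0 ≤ b') (hb : b' ≤ b) :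
    (a, b', 0) ∈ I := by
  have hWt : (a, b, 0) ∈ Wt n := hI.1 h
  rw [mem_Wt'] at hWt
  obtain ⟨k, hk⟩ : ∃ k : ℕ, b - b' = k := ⟨(b-b').toNat, by omega⟩
  induction k generalizing b' with
  | zero =>
    have : b' = b := by omega
    subst this; exact h
  | succ k ih =>
    have hmem : (a, b'+1, 0) ∈ I := ih (by omega) (by omega) (by omega)
    have hadd : (a, b', (0:ℤ)) + vg = (a, b'+1, 0) := by simp [vg, Prod.ext_iff]
    refine (isIdeal_bg_iff.1 hI).2.2 (a, b', 0) ?_ (by rw [hadd]; exact hmem)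
    rw [mem_Wt']
    refine ⟨by omega, by omega, rfl, by omega⟩

lemma mem_col {a b : ℤ} : (a, b, 0) ∈ I ↔ 0 ≤ b ∧ b < colN I a := by
  classical
  set B : Finset ℤ := (I.filter (fun p => p.1 = a)).image (fun p => p.2.1) with hB
  have hmemB : ∀ b : ℤ, b ∈ B ↔ (a, b, 0) ∈ I := by
    intro b
    simp only [hB, Finset.mem_image, Finset.mem_filter]
    constructor
    · rintro ⟨p, ⟨hpI, hpa⟩, hpb⟩
      have := eta_Wt (hI.1 hpI)
      rw [this, hpa, hpb] at hpI
      exact hpI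
    · intro h
      exact ⟨(a, b, 0), ⟨h, rfl⟩, rfl⟩
  have hcardB : B.card = colN I a := by
    rw [hB, colN]
    apply Finset.card_image_of_injOn
    intro p hp q hq hpq
    rw [Finset.mem_coe, Finset.mem_filter] at hp hq
    have hp' := eta_Wt (hI.1 hp.1)
    have hq' := eta_Wt (hI.1 hq.1)
    have hpq' : p.2.1 = q.2.1 := hpq
    rw [hp', hq', hp.2, hq.2, hpq']
  have h0 : ∀ b ∈ B, 0 ≤ b := by
    intro b hb
    rw [hmemB] at hb
    exact (mem_Wt'.1 (hI.1 hb)).2.1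
  have hdc : ∀ b ∈ B, ∀ b', 0 ≤ b' → b' ≤ b → b' ∈ B := by
    intro b hb b' h0' hb'
    rw [hmemB] at hb ⊢
    exact col_down hI hb h0' hb'
  rw [← hmemB, int_initseg h0 hdc, hcardB]

lemma col_bound {a : ℤ} (h : 0 < colN I a) : 0 ≤ a ∧ (colN I a : ℤ) ≤ (n:ℤ) - 1 - a := by
  have hmem : (a, (colN I a : ℤ) - 1, 0) ∈ I := (mem_col hI).2 ⟨by omega, by omega⟩
  have := mem_Wt'.1 (hI.1 hmem)
  omega

lemma col_chain (a : ℤ) : colN I a ≤ colN I (a+1) + 1 := by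
  by_contra hcon
  push_neg at hcon
  set b : ℤ := (colN I (a+1) : ℤ) + 1 with hb
  have hmem : (a, b, 0) ∈ I := by
    rw [mem_col hI]
    omega
  have hWt := mem_Wt'.1 (hI.1 hmem)
  have hadd : (a+1, b-1, (0:ℤ)) + vb = (a, b, 0) := by simp [vb, Prod.ext_iff]
  have hmem2 : (a+1, b-1, (0:ℤ)) ∈ I := by
    refine (isIdeal_bg_iff.1 hI).2.1 (a+1, b-1, 0) ?_ (by rw [hadd]; exact hmem)
    rw [mem_Wt']
    refine ⟨by omega, by omega, rfl, by omega⟩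
  have := ((mem_col hI).1 hmem2).2
  omega

end ColAux


section TriCount

open Finset

lemma mem_ideals3 {S : Set (ℤ×ℤ×ℤ)} {W I : Finset (ℤ×ℤ×ℤ)} :
    I ∈ ideals3 S W ↔ IsIdeal3 S W I := by
  constructor
  · intro h
    exact (Finset.mem_filter.1 h).2
  · intro h
    exact Finset.mem_filter.2 ⟨Finset.mem_powerset.2 h.1, h⟩

lemma Ase_getD_le {t p : ℕ} {l : List ℕ} (h : l ∈ Ase t p) :
    ∀ j, l.getD j 0 ≤ p + j + 1 := by
  induction t generalizing p l with
  | zero =>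
    have : l = [] := by simpa [Ase] using h
    subst this
    intro j; simp
  | succ t ih =>
    rw [show Ase (t+1) p = (Finset.range (p+2)).biUnion
      (fun k => (Ase t k).image (List.cons k)) from rfl] at h
    simp only [Finset.mem_biUnion, Finset.mem_range, Finset.mem_image] at h
    obtain ⟨k, hk, l', hl', rfl⟩ := h
    intro j
    cases j with
    | zero => show k ≤ p + 0 + 1; omega
    | succ j =>
      show l'.getD j 0 ≤ p + (j+1) + 1
      have := ih hl' j
      omega

lemma Ase_chain_getD {t p : ℕ} {l : List ℕ} (h : l ∈ Ase t p) :
    ∀ j, l.getD (j+1) 0 ≤ l.getD j 0 + 1 := by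
  induction t generalizing p l with
  | zero =>
    have : l = [] := by simpa [Ase] using h
    subst this
    intro j; simp
  | succ t ih =>
    rw [show Ase (t+1) p = (Finset.range (p+2)).biUnion
      (fun k => (Ase t k).image (List.cons k)) from rfl] at h
    simp only [Finset.mem_biUnion, Finset.mem_range, Finset.mem_image] at h
    obtain ⟨k, hk, l', hl', rfl⟩ := h
    intro j
    cases j with
    | zero =>
      show l'.getD 0 0 ≤ k + 1
      have := Ase_getD_le hl' 0
      omega
    | succ j => exact ih hl' j

lemma map_range_mem_Ase {p : ℕ} {f : ℕ → ℕ} (hf0 : f 0 ≤ p+1)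
    (hfs : ∀ j, f (j+1) ≤ f j + 1) : ∀ t, (List.range t).map f ∈ Ase t p := by
  intro t
  induction t generalizing p f with
  | zero => simp [Ase]
  | succ t ih =>
    rw [List.range_succ_eq_map, List.map_cons, List.map_map]
    rw [show Ase (t+1) p = (Finset.range (p+2)).biUnion
      (fun k => (Ase t k).image (List.cons k)) from rfl]
    simp only [Finset.mem_biUnion, Finset.mem_range, Finset.mem_image]
    exact ⟨f 0, by omega, (List.range t).map (f ∘ Nat.succ),
      ih (hfs 0) (fun j => hfs (j+1)), rfl⟩

lemma getD_map_range (f : ℕ → ℕ) {t j : ℕ} (hj : j < t) :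
    ((List.range t).map f).getD j 0 = f j := by
  rw [List.getD_eq_getElem?_getD, List.getElem?_map, List.getElem?_range hj]
  rfl

lemma card_ideals_Wt (n : ℕ) (hn : 1 ≤ n) :
    (ideals3 {vb, vg} (Wt n)).card = catalan n := by
  have hmain : (ideals3 {vb, vg} (Wt n)).card = (Ase (n-1) 0).card := by
    apply Finset.card_bij
      (fun I _ => (List.range (n-1)).map (fun j : ℕ => colN I ((n:ℤ) - 2 - (j:ℤ))))
    · -- well-defined
      intro I hI
      have hI' := mem_ideals3.1 hI
      apply map_range_mem_Ase
      · -- colN I (n-2) ≤ 1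
        show colN I ((n:ℤ) - 2 - ((0:ℕ):ℤ)) ≤ 0 + 1
        rcases Nat.eq_zero_or_pos (colN I ((n:ℤ) - 2 - ((0:ℕ):ℤ))) with h | h
        · omega
        · have := col_bound hI' h
          omega
      · intro j
        have := col_chain hI' ((n:ℤ) - 2 - (j+1 : ℕ))
        have heq : (n:ℤ) - 2 - (j+1 : ℕ) + 1 = (n:ℤ) - 2 - (j:ℕ) := by push_cast; ring
        rw [heq] at this
        exact this
    · -- injective
      intro I₁ hI₁ I₂ hI₂ heq
      have h1 := mem_ideals3.1 hI₁
      have h2 := mem_ideals3.1 hI₂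
      have hcol : ∀ a : ℤ, 0 ≤ a → a ≤ (n:ℤ) - 2 → colN I₁ a = colN I₂ a := by
        intro a ha0 ha2
        have hj : ((n:ℤ) - 2 - a).toNat < n - 1 := by omega
        have e1 := getD_map_range (fun j : ℕ => colN I₁ ((n:ℤ) - 2 - (j:ℤ))) hj
        have e2 := getD_map_range (fun j : ℕ => colN I₂ ((n:ℤ) - 2 - (j:ℤ))) hj
        rw [heq] at e1
        rw [e1] at e2
        have ha : (n:ℤ) - 2 - (((n:ℤ) - 2 - a).toNat : ℕ) = a := by omega
        rw [ha] at e2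
        exact e2
      apply Finset.ext
      intro p
      constructor
      · intro hp
        have hpW := mem_Wt.1 (h1.1 hp)
        have hpe := eta_Wt (h1.1 hp)
        rw [hpe] at hp ⊢
        rw [mem_col h2, ← hcol p.1 hpW.1 (by omega), ← mem_col h1]
        exact hp
      · intro hp
        have hpW := mem_Wt.1 (h2.1 hp)
        have hpe := eta_Wt (h2.1 hp)
        rw [hpe] at hp ⊢
        rw [mem_col h1, hcol p.1 hpW.1 (by omega), ← mem_col h2]
        exact hp
    · -- surjective
      intro l hl
      have hlen : l.length = n - 1 := (mem_Ase.1 hl).1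
      set Mf : ℤ → ℕ := fun a => l.getD ((n:ℤ) - 2 - a).toNat 0 with hMf
      set I : Finset (ℤ×ℤ×ℤ) := (Wt n).filter (fun p => p.2.1 < (Mf p.1 : ℤ)) with hIdef
      clear_value Mf I
      have hmemI : ∀ p : ℤ×ℤ×ℤ, p ∈ I ↔ p ∈ Wt n ∧ p.2.1 < (Mf p.1 : ℤ) := by
        intro p; rw [hIdef]; exact Finset.mem_filter
      have hId : IsIdeal3 {vb, vg} (Wt n) I := by
        rw [isIdeal_bg_iff]
        refine ⟨by rw [hIdef]; exact Finset.filter_subset _ _, ?_, ?_⟩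
        · -- vb closure
          intro p hp hmem
          rw [hmemI] at hmem ⊢
          refine ⟨hp, ?_⟩
          obtain ⟨hmW, hmlt⟩ := hmem
          have hfst : (p + vb).1 = p.1 - 1 := by
            simp only [vb, Prod.fst_add]; ring
          have hsnd : (p + vb).2.1 = p.2.1 + 1 := by
            simp only [vb, Prod.snd_add, Prod.fst_add]
          rw [hfst] at hmlt
          rw [hsnd] at hmlt
          -- chain : Mf (p.1 - 1) ≤ Mf p.1 + 1
          have hpW := mem_Wt.1 hp
          have hmW' := mem_Wt.1 hmW
          rw [hfst, hsnd] at hmW'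
          have hidx : ((n:ℤ) - 2 - (p.1 - 1)).toNat = ((n:ℤ) - 2 - p.1).toNat + 1 := by
            omega
          have hchain := Ase_chain_getD hl (((n:ℤ) - 2 - p.1).toNat)
          have : Mf (p.1 - 1) ≤ Mf p.1 + 1 := by
            rw [hMf]
            simpa [hidx] using hchain
          omega
        · -- vg closure
          intro p hp hmem
          rw [hmemI] at hmem ⊢
          refine ⟨hp, ?_⟩
          obtain ⟨hmW, hmlt⟩ := hmem
          have hfst : (p + vg).1 = p.1 := by simp [vg, Prod.fst_add]
          have hsnd : (p + vg).2.1 = p.2.1 + 1 := by simp [vg, Prod.snd_add]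
          rw [hfst, hsnd] at hmlt
          omega
      refine ⟨I, mem_ideals3.2 hId, ?_⟩
      -- toList I = l
      apply List.ext_getElem
      · simp [hlen]
      · intro j hj1 hj2
        have hj : j < n - 1 := by simpa using hj1
        have hgd : ((List.range (n-1)).map (fun j : ℕ => colN I ((n:ℤ) - 2 - (j:ℤ)))).getD j 0
            = colN I ((n:ℤ) - 2 - j) := getD_map_range _ hj
        rw [← List.getD_eq_getElem _ 0 hj1, ← List.getD_eq_getElem _ 0 hj2, hgd]
        -- show colN I (n-2-j) = l.getD j 0
        set a : ℤ := (n:ℤ) - 2 - j with hadef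
        have hMfa : Mf a = l.getD j 0 := by
          rw [hMf]
          show l.getD ((n:ℤ)-2-a).toNat 0 = l.getD j 0
          have hja : ((n:ℤ)-2-a).toNat = j := by omega
          rw [hja]
        have hbound : (Mf a : ℤ) ≤ (n:ℤ) - 1 - a := by
          rw [hMfa]
          have := Ase_getD_le hl j
          omega
        have hiff : ∀ b : ℤ, (0 ≤ b ∧ b < (colN I a : ℤ)) ↔ (0 ≤ b ∧ b < (Mf a : ℤ)) := by
          intro b
          rw [← mem_col hId, hmemI]
          constructor
          · rintro ⟨hW, hlt⟩
            exact ⟨(mem_Wt'.1 hW).2.1, hlt⟩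
          · rintro ⟨hb0, hblt⟩
            refine ⟨mem_Wt'.2 ⟨by omega, hb0, rfl, by omega⟩, hblt⟩
        have i1 := hiff (colN I a)
        have i2 := hiff (Mf a)
        rw [← hMfa]
        omega
  rw [hmain, card_Ase_zero, Nat.sub_add_cancel hn]

end TriCount


section Slice

open Finset

lemma add_w_cancel (p : ℤ×ℤ×ℤ) : p + ((0:ℤ),(0:ℤ),(-1:ℤ)) + ((0:ℤ),(0:ℤ),(1:ℤ)) = p := by
  refine Prod.ext ?_ (Prod.ext ?_ ?_)
  · show p.1 + 0 + 0 = p.1; ring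
  · show p.2.1 + 0 + 0 = p.2.1; ring
  · show p.2.2 + (-1) + 1 = p.2.2; ring

lemma add_w_cancel' (p : ℤ×ℤ×ℤ) : p + ((0:ℤ),(0:ℤ),(1:ℤ)) + ((0:ℤ),(0:ℤ),(-1:ℤ)) = p := by
  refine Prod.ext ?_ (Prod.ext ?_ ?_)
  · show p.1 + 0 + 0 = p.1; ring
  · show p.2.1 + 0 + 0 = p.2.1; ring
  · show p.2.2 + 1 + (-1) = p.2.2; ring

lemma shift_up {n : ℕ} {p : ℤ×ℤ×ℤ} (h : p ∈ V3 n) :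
    p + ((0:ℤ),(0:ℤ),(1:ℤ)) ∈ V3 (n+1) := by
  rw [mem_V3] at h ⊢
  have e1 : (p + ((0:ℤ),(0:ℤ),(1:ℤ))).1 = p.1 + 0 := rfl
  have e2 : (p + ((0:ℤ),(0:ℤ),(1:ℤ))).2.1 = p.2.1 + 0 := rfl
  have e3 : (p + ((0:ℤ),(0:ℤ),(1:ℤ))).2.2 = p.2.2 + 1 := rfl
  push_cast
  omega

lemma shift_down {n : ℕ} {p : ℤ×ℤ×ℤ} (h : p + ((0:ℤ),(0:ℤ),(1:ℤ)) ∈ V3 (n+1))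
    (hc : 0 ≤ p.2.2) : p ∈ V3 n := by
  rw [mem_V3] at h ⊢
  have e1 : (p + ((0:ℤ),(0:ℤ),(1:ℤ))).1 = p.1 + 0 := rfl
  have e2 : (p + ((0:ℤ),(0:ℤ),(1:ℤ))).2.1 = p.2.1 + 0 := rfl
  have e3 : (p + ((0:ℤ),(0:ℤ),(1:ℤ))).2.2 = p.2.2 + 1 := rfl
  rw [e1, e2, e3] at h
  push_cast at h ⊢
  omega

lemma mem_hi {I : Finset (ℤ×ℤ×ℤ)} {q : ℤ×ℤ×ℤ} :
    q ∈ (I.filter (fun p => 1 ≤ p.2.2)).image (fun p => p + ((0:ℤ),(0:ℤ),(-1:ℤ))) ↔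
      q + ((0:ℤ),(0:ℤ),(1:ℤ)) ∈ I ∧ 0 ≤ q.2.2 := by
  rw [Finset.mem_image]
  constructor
  · rintro ⟨p, hp, rfl⟩
    rw [Finset.mem_filter] at hp
    rw [add_w_cancel]
    have e : (p + ((0:ℤ),(0:ℤ),(-1:ℤ))).2.2 = p.2.2 + (-1) := rfl
    exact ⟨hp.1, by rw [e]; omega⟩
  · rintro ⟨h1, h2⟩
    refine ⟨q + ((0:ℤ),(0:ℤ),(1:ℤ)), Finset.mem_filter.2 ⟨h1, ?_⟩, add_w_cancel' q⟩
    show 1 ≤ q.2.2 + 1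
    omega

lemma mem_up {K : Finset (ℤ×ℤ×ℤ)} {q : ℤ×ℤ×ℤ} :
    q ∈ K.image (fun p => p + ((0:ℤ),(0:ℤ),(1:ℤ))) ↔ q + ((0:ℤ),(0:ℤ),(-1:ℤ)) ∈ K := by
  rw [Finset.mem_image]
  constructor
  · rintro ⟨p, hp, rfl⟩
    rwa [add_w_cancel']
  · intro h
    exact ⟨q + ((0:ℤ),(0:ℤ),(-1:ℤ)), h, add_w_cancel q⟩

lemma slice_card (n : ℕ) :
    (ideals3 {vb, vg} (V3 (n+1))).card
      = (ideals3 {vb, vg} (Wt (n+1))).card * (ideals3 {vb, vg} (V3 n)).card := by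
  rw [← Finset.card_product]
  apply Finset.card_bij (fun I _ =>
    (I.filter (fun p => p.2.2 = 0),
     (I.filter (fun p => 1 ≤ p.2.2)).image (fun p => p + ((0:ℤ),(0:ℤ),(-1:ℤ)))))
  · -- maps into the product
    intro I hI
    have h := mem_ideals3.1 hI
    rw [Finset.mem_product]
    constructor
    · -- low part is an ideal of Wt (n+1)
      rw [mem_ideals3, isIdeal_bg_iff]
      refine ⟨?_, ?_, ?_⟩
      · intro p hp
        rw [Finset.mem_filter] at hp
        rw [Wt, Finset.mem_filter]
        exact ⟨h.1 hp.1, hp.2⟩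
      · intro p hp hmem
        rw [Finset.mem_filter] at hmem ⊢
        refine ⟨(isIdeal_bg_iff.1 h).2.1 p (Finset.filter_subset _ _ hp) hmem.1,
          (mem_Wt.1 hp).2.2.1⟩
      · intro p hp hmem
        rw [Finset.mem_filter] at hmem ⊢
        refine ⟨(isIdeal_bg_iff.1 h).2.2 p (Finset.filter_subset _ _ hp) hmem.1,
          (mem_Wt.1 hp).2.2.1⟩
    · -- high part is an ideal of V3 n
      rw [mem_ideals3, isIdeal_bg_iff]
      refine ⟨?_, ?_, ?_⟩
      · intro q hq
        rw [mem_hi] at hq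
        exact shift_down (h.1 hq.1) hq.2
      · intro q hq hmem
        rw [mem_hi] at hmem ⊢
        obtain ⟨h1, _⟩ := hmem
        rw [add_right_comm q vb ((0:ℤ),(0:ℤ),(1:ℤ))] at h1
        exact ⟨(isIdeal_bg_iff.1 h).2.1 (q + ((0:ℤ),(0:ℤ),(1:ℤ))) (shift_up hq) h1,
          (mem_V3.1 hq).2.2.1⟩
      · intro q hq hmem
        rw [mem_hi] at hmem ⊢
        obtain ⟨h1, _⟩ := hmem
        rw [add_right_comm q vg ((0:ℤ),(0:ℤ),(1:ℤ))] at h1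
        exact ⟨(isIdeal_bg_iff.1 h).2.2 (q + ((0:ℤ),(0:ℤ),(1:ℤ))) (shift_up hq) h1,
          (mem_V3.1 hq).2.2.1⟩
  · -- injective
    intro I₁ hI₁ I₂ hI₂ heq
    rw [Prod.mk.injEq] at heq
    obtain ⟨hlo, hhi⟩ := heq
    have key : ∀ {I J : Finset (ℤ×ℤ×ℤ)}, I ⊆ V3 (n+1) →
        I.filter (fun p => p.2.2 = 0) = J.filter (fun p => p.2.2 = 0) →
        (I.filter (fun p => 1 ≤ p.2.2)).image (fun p => p + ((0:ℤ),(0:ℤ),(-1:ℤ)))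
          = (J.filter (fun p => 1 ≤ p.2.2)).image (fun p => p + ((0:ℤ),(0:ℤ),(-1:ℤ))) →
        ∀ p ∈ I, p ∈ J := by
      intro I J hsub hlo' hhi' p hp
      have hpV := mem_V3.1 (hsub hp)
      rcases eq_or_lt_of_le hpV.2.2.1 with hc0 | hc1
      · have hmem : p ∈ I.filter (fun p => p.2.2 = 0) :=
          Finset.mem_filter.2 ⟨hp, hc0.symm⟩
        rw [hlo'] at hmem
        exact (Finset.mem_filter.1 hmem).1
      · have e : (p + ((0:ℤ),(0:ℤ),(-1:ℤ))).2.2 = p.2.2 + (-1) := rfl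
        have hmem : p + ((0:ℤ),(0:ℤ),(-1:ℤ)) ∈
            (I.filter (fun p => 1 ≤ p.2.2)).image (fun p => p + ((0:ℤ),(0:ℤ),(-1:ℤ))) :=
          mem_hi.2 ⟨by rw [add_w_cancel]; exact hp, by rw [e]; omega⟩
        rw [hhi'] at hmem
        have hmem2 := mem_hi.1 hmem
        rw [add_w_cancel] at hmem2
        exact hmem2.1
    have hs₁ := (mem_ideals3.1 hI₁).1
    have hs₂ := (mem_ideals3.1 hI₂).1
    apply Finset.Subset.antisymm
    · intro p hp; exact key hs₁ hlo hhi p hp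
    · intro p hp; exact key hs₂ hlo.symm hhi.symm p hp
  · -- surjective
    rintro ⟨J, K⟩ hpair
    rw [Finset.mem_product] at hpair
    obtain ⟨hJ, hK⟩ := hpair
    have hJi := mem_ideals3.1 hJ
    have hKi := mem_ideals3.1 hK
    have hJV : J ⊆ V3 (n+1) := fun p hp => Finset.filter_subset _ _ (hJi.1 hp)
    refine ⟨J ∪ K.image (fun p => p + ((0:ℤ),(0:ℤ),(1:ℤ))), ?_, ?_⟩
    · -- the union is an ideal of V3 (n+1)
      rw [mem_ideals3, isIdeal_bg_iff]
      refine ⟨?_, ?_, ?_⟩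
      · apply Finset.union_subset hJV
        intro q hq
        rw [mem_up] at hq
        have := shift_up (hKi.1 hq)
        rwa [add_w_cancel] at this
      · -- vb closure
        intro p hp hmem
        rw [Finset.mem_union] at hmem ⊢
        rcases hmem with hmJ | hmK
        · left
          have ec : (p + vb).2.2 = p.2.2 + 0 := rfl
          have hc0 := (mem_Wt.1 (hJi.1 hmJ)).2.2.1
          have hpW : p ∈ Wt (n+1) := by
            rw [Wt, Finset.mem_filter]
            exact ⟨hp, by rw [ec] at hc0; omega⟩
          exact (isIdeal_bg_iff.1 hJi).2.1 p hpW hmJ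
        · right
          rw [mem_up] at hmK ⊢
          rw [add_right_comm p vb ((0:ℤ),(0:ℤ),(-1:ℤ))] at hmK
          have hcK := (mem_V3.1 (hKi.1 hmK)).2.2.1
          have ec : (p + ((0:ℤ),(0:ℤ),(-1:ℤ)) + vb).2.2 = p.2.2 + (-1) + 0 := rfl
          have hpV : p + ((0:ℤ),(0:ℤ),(-1:ℤ)) ∈ V3 n := by
            apply shift_down (by rw [add_w_cancel]; exact hp)
            show 0 ≤ p.2.2 + (-1)
            rw [ec] at hcK
            omega
          exact (isIdeal_bg_iff.1 hKi).2.1 _ hpV hmK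
      · -- vg closure
        intro p hp hmem
        rw [Finset.mem_union] at hmem ⊢
        rcases hmem with hmJ | hmK
        · left
          have ec : (p + vg).2.2 = p.2.2 + 0 := rfl
          have hc0 := (mem_Wt.1 (hJi.1 hmJ)).2.2.1
          have hpW : p ∈ Wt (n+1) := by
            rw [Wt, Finset.mem_filter]
            exact ⟨hp, by rw [ec] at hc0; omega⟩
          exact (isIdeal_bg_iff.1 hJi).2.2 p hpW hmJ
        · right
          rw [mem_up] at hmK ⊢
          rw [add_right_comm p vg ((0:ℤ),(0:ℤ),(-1:ℤ))] at hmK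
          have hcK := (mem_V3.1 (hKi.1 hmK)).2.2.1
          have ec : (p + ((0:ℤ),(0:ℤ),(-1:ℤ)) + vg).2.2 = p.2.2 + (-1) + 0 := rfl
          have hpV : p + ((0:ℤ),(0:ℤ),(-1:ℤ)) ∈ V3 n := by
            apply shift_down (by rw [add_w_cancel]; exact hp)
            show 0 ≤ p.2.2 + (-1)
            rw [ec] at hcK
            omega
          exact (isIdeal_bg_iff.1 hKi).2.2 _ hpV hmK
    · -- components recover (J, K)
      rw [Prod.mk.injEq]
      constructor
      · apply Finset.ext
        intro p
        rw [Finset.mem_filter, Finset.mem_union]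
        constructor
        · rintro ⟨hmem | hmem, hc⟩
          · exact hmem
          · exfalso
            rw [mem_up] at hmem
            have := (mem_V3.1 (hKi.1 hmem)).2.2.1
            have ec : (p + ((0:ℤ),(0:ℤ),(-1:ℤ))).2.2 = p.2.2 + (-1) := rfl
            rw [ec] at this
            omega
        · intro hpJ
          exact ⟨Or.inl hpJ, (mem_Wt.1 (hJi.1 hpJ)).2.2.1⟩
      · apply Finset.ext
        intro q
        rw [mem_hi]
        constructor
        · rintro ⟨hmem, hq0⟩
          rw [Finset.mem_union] at hmem
          rcases hmem with hmJ | hmK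
          · exfalso
            have := (mem_Wt.1 (hJi.1 hmJ)).2.2.1
            have ec : (q + ((0:ℤ),(0:ℤ),(1:ℤ))).2.2 = q.2.2 + 1 := rfl
            rw [ec] at this
            omega
          · rw [mem_up, add_w_cancel'] at hmK
            exact hmK
        · intro hqK
          refine ⟨Finset.mem_union_right _ ?_, (mem_V3.1 (hKi.1 hqK)).2.2.1⟩
          rw [mem_up, add_w_cancel']
          exact hqK

end Slice


/-- The number of order ideals of `T_n({b,g})` is the product of the first `n`
Catalan numbers. -/
theorem stmt6 (n : ℕ) (hn : 1 ≤ n) :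
    (ideals3 {vb, vg} (V3 n)).card = ∏ j ∈ Finset.Icc 1 n, catalan j := by
  induction n, hn using Nat.le_induction with
  | base =>
    have hV : V3 1 = ∅ := by
      rw [Finset.eq_empty_iff_forall_notMem]
      intro p hp
      have := mem_V3.1 hp
      omega
    have hid : ideals3 {vb, vg} (V3 1) = {∅} := by
      apply Finset.ext
      intro I
      rw [mem_ideals3, Finset.mem_singleton]
      constructor
      · intro h
        have := h.1
        rw [hV] at this
        exact Finset.subset_empty.1 this
      · rintro rfl
        exact ⟨Finset.empty_subset _, fun u v _ hv => absurd hv (Finset.notMem_empty v)⟩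
    rw [hid]
    simp [catalan_one]
  | succ n hn ih =>
    rw [slice_card n, card_ideals_Wt (n+1) (by omega), ih,
      Finset.prod_Icc_succ_top (by omega : 1 ≤ n+1)]
    ring
end

section
/- For every integer n ≥ 1, the rank generating function of the order ideals of the three-color tetrahedral poset T_n({r,b,g}) satisfies F(J(T_n({r,b,g})),q) = ∏_{j=1}^{n−1} (1+q^j)^{n−j}, as polynomials in ℤ[q]; in particular the number of order ideals is 2^{binomial(n,2)}. -/
open scoped Classical

namespace Stmt8Aux

open Finset

lemma mem_V3 {n : ℕ} {v : ℤ × ℤ × ℤ} :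
    v ∈ V3 n ↔ 0 ≤ v.1 ∧ 0 ≤ v.2.1 ∧ 0 ≤ v.2.2 ∧ v.1 + v.2.1 + v.2.2 ≤ (n:ℤ) - 2 := by
  simp only [V3, Finset.mem_filter, Finset.mem_product, Finset.mem_Icc]
  omega

/-- The index set: pairs `(j, c)` with `1 ≤ j` and `j + c ≤ n - 1`. -/
def Pn (n : ℕ) : Finset (ℕ × ℕ) :=
  (Finset.range n ×ˢ Finset.range n).filter (fun p => 1 ≤ p.1 ∧ p.1 + p.2 + 1 ≤ n)

lemma mem_Pn {n : ℕ} {p : ℕ × ℕ} : p ∈ Pn n ↔ 1 ≤ p.1 ∧ p.1 + p.2 + 1 ≤ n := by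
  simp only [Pn, Finset.mem_filter, Finset.mem_product, Finset.mem_range]
  omega

/-- The number of elements `(j, c') ∈ A` with `c' = c` and `j > a`. -/
def cnt (A : Finset (ℕ × ℕ)) (c a : ℤ) : ℕ :=
  (A.filter (fun p => (p.2 : ℤ) = c ∧ a < (p.1 : ℤ))).card

lemma cnt_anti (A : Finset (ℕ × ℕ)) {c a a' : ℤ} (h : a ≤ a') : cnt A c a' ≤ cnt A c a := by
  apply Finset.card_le_card
  intro p hp
  simp only [Finset.mem_filter] at hp ⊢
  exact ⟨hp.1, hp.2.1, by omega⟩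

lemma cnt_pred (A : Finset (ℕ × ℕ)) {c : ℤ} (hc : 0 ≤ c) (j : ℕ) :
    cnt A c ((j:ℤ) - 1) = cnt A c (j:ℤ) + (if (j, c.toNat) ∈ A then 1 else 0) := by
  unfold cnt
  rw [Finset.filter_congr (q := fun p : ℕ × ℕ =>
      ((p.2:ℤ) = c ∧ (j:ℤ) < (p.1:ℤ)) ∨ ((p.2:ℤ) = c ∧ (p.1:ℤ) = (j:ℤ)))
      (fun p _ => by omega)]
  rw [Finset.filter_or, Finset.card_union_of_disjoint]
  · congr 1
    rw [Finset.filter_congr (q := fun p : ℕ × ℕ => p = (j, c.toNat)) ?_]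
    · rw [Finset.filter_eq']
      split
      · simp
      · simp
    · intro p _
      constructor
      · rintro ⟨h1, h2⟩
        have hp2 : p.2 = c.toNat := by omega
        have hp1 : p.1 = j := by omega
        exact Prod.ext hp1 hp2
      · rintro rfl
        constructor
        · show (c.toNat : ℤ) = c
          omega
        · show (j : ℤ) = (j : ℤ)
          rfl
  · rw [Finset.disjoint_left]
    intro p h1 h2
    simp only [Finset.mem_filter] at h1 h2
    omega

lemma cnt_drop (A : Finset (ℕ × ℕ)) {c : ℤ} (hc : 0 ≤ c) {a : ℤ} (ha : 0 ≤ a) :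
    cnt A c (a - 1) ≤ cnt A c a + 1 := by
  have h := cnt_pred A hc a.toNat
  rw [Int.toNat_of_nonneg ha] at h
  split at h <;> omega

lemma cnt_bound {n : ℕ} {A : Finset (ℕ × ℕ)} (hA : A ⊆ Pn n) (c a : ℤ)
    (h1 : 1 ≤ cnt A c a) : (cnt A c a : ℤ) + c + a ≤ (n:ℤ) - 1 := by
  have hle : cnt A c a ≤ (Finset.Ioc a ((n:ℤ) - 1 - c)).card := by
    apply Finset.card_le_card_of_injOn (fun p => (p.1 : ℤ))
    · intro p hp
      simp only [Finset.mem_coe, Finset.mem_filter] at hp ⊢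
      have hP := mem_Pn.1 (hA hp.1)
      rw [Finset.mem_Ioc]
      omega
    · intro p hp q hq hpq
      simp only [Finset.mem_coe, Finset.mem_filter] at hp hq
      have hpq' : (p.1 : ℤ) = (q.1 : ℤ) := hpq
      have h1 : p.1 = q.1 := by omega
      have h2 : p.2 = q.2 := by omega
      exact Prod.ext h1 h2
  rw [Int.card_Ioc] at hle
  omega

/-- The ideal associated to a subset `A ⊆ Pn n`. -/
noncomputable def Phi (n : ℕ) (A : Finset (ℕ × ℕ)) : Finset (ℤ × ℤ × ℤ) :=
  (V3 n).filter (fun v => v.2.1 < (cnt A v.2.2 v.1 : ℤ))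

lemma mem_Phi {n : ℕ} {A : Finset (ℕ × ℕ)} {v : ℤ × ℤ × ℤ} :
    v ∈ Phi n A ↔ v ∈ V3 n ∧ v.2.1 < (cnt A v.2.2 v.1 : ℤ) := Finset.mem_filter

lemma ideal_of_step {S : Set (ℤ × ℤ × ℤ)} {W : Finset (ℤ × ℤ × ℤ)} {I : Finset (ℤ × ℤ × ℤ)}
    (hIW : I ⊆ W) (h : ∀ u v, step3 S W u v → v ∈ I → u ∈ I) : IsIdeal3 S W I := by
  refine ⟨hIW, fun u v hle => ?_⟩
  obtain ⟨-, -, hrt⟩ := hle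
  induction hrt with
  | refl => exact id
  | tail _ hstep ih => exact fun hv => ih (h _ _ hstep hv)

lemma step_of_ideal {S : Set (ℤ × ℤ × ℤ)} {W : Finset (ℤ × ℤ × ℤ)} {I : Finset (ℤ × ℤ × ℤ)}
    (h : IsIdeal3 S W I) : ∀ u v, step3 S W u v → v ∈ I → u ∈ I :=
  fun u v hs => h.2 u v ⟨hs.1, hs.2.1, Relation.ReflTransGen.single hs⟩

lemma Phi_mem_ideals {n : ℕ} {A : Finset (ℕ × ℕ)} (hA : A ⊆ Pn n) :
    Phi n A ∈ ideals3 {vr, vb, vg} (V3 n) := by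
  rw [ideals3, Finset.mem_filter, Finset.mem_powerset]
  have hsub : Phi n A ⊆ V3 n := Finset.filter_subset _ _
  refine ⟨hsub, ideal_of_step hsub ?_⟩
  rintro u v ⟨huW, hvW, e, he, rfl⟩ hv
  rw [mem_Phi] at hv ⊢
  refine ⟨huW, ?_⟩
  obtain ⟨a, b, c⟩ := u
  have hV := mem_V3.1 huW
  simp only at hV
  simp only [Set.mem_insert_iff, Set.mem_singleton_iff] at he
  rcases he with rfl | rfl | rfl
  · simp only [vr, Prod.mk_add_mk, add_zero] at hv
    have h2 : cnt A c (a + 1) ≤ cnt A c a := cnt_anti A (by omega)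
    have hv2 := hv.2
    show (b : ℤ) < (cnt A c a : ℤ)
    omega
  · simp only [vb, Prod.mk_add_mk, add_zero] at hv
    have h2 : cnt A c (a + -1) ≤ cnt A c a + 1 := by
      have := cnt_drop A (c := c) hV.2.2.1 hV.1
      rwa [show a - 1 = a + -1 by ring] at this
    have hv2 := hv.2
    show (b : ℤ) < (cnt A c a : ℤ)
    omega
  · simp only [vg, Prod.mk_add_mk, add_zero] at hv
    have hv2 := hv.2
    show (b : ℤ) < (cnt A c a : ℤ)
    omega

lemma card_Phi {n : ℕ} {A : Finset (ℕ × ℕ)} (hA : A ⊆ Pn n) :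
    (Phi n A).card = ∑ p ∈ A, p.1 := by
  have key : (Phi n A).card =
      ((Finset.Icc (0:ℤ) (n:ℤ) ×ˢ Finset.Icc (0:ℤ) (n:ℤ)).sigma
        (fun x => Finset.range (cnt A x.2 x.1))).card := by
    refine Finset.card_bij' (fun v _ => ⟨(v.1, v.2.2), v.2.1.toNat⟩)
      (fun x _ => (x.1.1, (x.2 : ℤ), x.1.2)) ?_ ?_ ?_ ?_
    · intro v hv
      rw [mem_Phi] at hv
      have hV := mem_V3.1 hv.1
      have hc := hv.2
      simp only [Finset.mem_sigma, Finset.mem_product, Finset.mem_Icc, Finset.mem_range]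
      omega
    · intro x hx
      obtain ⟨⟨a, c⟩, b⟩ := x
      simp only [Finset.mem_sigma, Finset.mem_product, Finset.mem_Icc, Finset.mem_range] at hx
      rw [mem_Phi, mem_V3]
      have hbd := cnt_bound hA c a (by omega)
      show (0 ≤ a ∧ 0 ≤ (b:ℤ) ∧ 0 ≤ c ∧ a + (b:ℤ) + c ≤ (n:ℤ) - 2) ∧ (b:ℤ) < (cnt A c a : ℤ)
      omega
    · intro v hv
      rw [mem_Phi] at hv
      have hV := mem_V3.1 hv.1
      show (v.1, ((v.2.1.toNat : ℤ)), v.2.2) = v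
      rw [Int.toNat_of_nonneg hV.2.1]
    · intro x hx
      obtain ⟨⟨a, c⟩, b⟩ := x
      simp
  rw [key, Finset.card_sigma]
  simp only [Finset.card_range]
  unfold cnt
  simp only [Finset.card_filter]
  rw [Finset.sum_comm]
  apply Finset.sum_congr rfl
  intro p hp
  have hP := mem_Pn.1 (hA hp)
  rw [← Finset.card_filter]
  have hfe : (Finset.Icc (0:ℤ) (n:ℤ) ×ˢ Finset.Icc (0:ℤ) (n:ℤ)).filter
      (fun x => (p.2 : ℤ) = x.2 ∧ x.1 < (p.1 : ℤ))
      = Finset.Ico (0:ℤ) (p.1:ℤ) ×ˢ {(p.2 : ℤ)} := by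
    ext x
    simp only [Finset.mem_filter, Finset.mem_product, Finset.mem_Icc, Finset.mem_Ico,
      Finset.mem_singleton]
    omega
  rw [hfe, Finset.card_product, Int.card_Ico, Finset.card_singleton]
  omega

/-- The number of points of `I` in the column with first coordinate `a` and last `c`. -/
def colI (I : Finset (ℤ × ℤ × ℤ)) (c a : ℤ) : ℕ :=
  (I.filter (fun v => v.1 = a ∧ v.2.2 = c)).card

lemma col_Phi {n : ℕ} {A : Finset (ℕ × ℕ)} (hA : A ⊆ Pn n) {a c : ℤ}
    (ha : 0 ≤ a) (hc : 0 ≤ c) : colI (Phi n A) c a = cnt A c a := by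
  have himg : (Phi n A).filter (fun v => v.1 = a ∧ v.2.2 = c)
      = (Finset.range (cnt A c a)).image (fun b : ℕ => (a, (b:ℤ), c)) := by
    ext v
    simp only [Finset.mem_filter, mem_Phi, Finset.mem_image, Finset.mem_range]
    constructor
    · rintro ⟨⟨hV, hcnt⟩, hva, hvc⟩
      have hV' := mem_V3.1 hV
      rw [hva, hvc] at hcnt
      refine ⟨v.2.1.toNat, by omega, ?_⟩
      rw [Int.toNat_of_nonneg hV'.2.1, ← hva, ← hvc]
    · rintro ⟨b, hb, rfl⟩
      have hbd := cnt_bound hA c a (by omega)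
      refine ⟨⟨mem_V3.2 ⟨ha, Int.natCast_nonneg b, hc, ?_⟩, ?_⟩, rfl, rfl⟩
      · show a + (b:ℤ) + c ≤ (n:ℤ) - 2
        omega
      · show (b:ℤ) < (cnt A c a : ℤ)
        omega
  unfold colI
  rw [himg, Finset.card_image_of_injOn, Finset.card_range]
  intro x _ y _ hxy
  simp only [Prod.ext_iff] at hxy
  exact_mod_cast hxy.2.1

lemma mem_A_iff {n : ℕ} {A : Finset (ℕ × ℕ)} (hA : A ⊆ Pn n) {p : ℕ × ℕ} :
    p ∈ A ↔ (p ∈ Pn n ∧ cnt A (p.2:ℤ) ((p.1:ℤ) - 1) ≠ cnt A (p.2:ℤ) (p.1:ℤ)) := by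
  have h := cnt_pred A (c := (p.2:ℤ)) (Int.natCast_nonneg p.2) p.1
  rw [Int.toNat_natCast] at h
  by_cases hmem : p ∈ A
  · rw [if_pos (by rwa [Prod.mk.eta])] at h
    exact iff_of_true hmem ⟨hA hmem, by omega⟩
  · rw [if_neg (by rwa [Prod.mk.eta])] at h
    exact iff_of_false hmem (by tauto)

lemma Phi_inj {n : ℕ} {A A' : Finset (ℕ × ℕ)} (hA : A ⊆ Pn n) (hA' : A' ⊆ Pn n)
    (h : Phi n A = Phi n A') : A = A' := by
  have hcnt : ∀ c a : ℤ, 0 ≤ a → 0 ≤ c → cnt A c a = cnt A' c a := by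
    intro c a ha hc
    rw [← col_Phi hA ha hc, ← col_Phi hA' ha hc, h]
  ext p
  rw [mem_A_iff hA, mem_A_iff hA']
  by_cases hp : p ∈ Pn n
  · have h1 := mem_Pn.1 hp
    rw [hcnt (p.2:ℤ) ((p.1:ℤ) - 1) (by omega) (Int.natCast_nonneg _),
      hcnt (p.2:ℤ) (p.1:ℤ) (Int.natCast_nonneg _) (Int.natCast_nonneg _)]
  · simp [hp]

section Surj

variable {n : ℕ} {I : Finset (ℤ × ℤ × ℤ)} (hIV : I ⊆ V3 n)
  (hstep : ∀ u v, step3 {vr, vb, vg} (V3 n) u v → v ∈ I → u ∈ I)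

include hIV hstep

lemma r_down {a b c : ℤ} (h : (a + 1, b, c) ∈ I) (ha : 0 ≤ a) : (a, b, c) ∈ I := by
  apply hstep (a, b, c) (a + 1, b, c) _ h
  have hV := mem_V3.1 (hIV h)
  simp only at hV
  refine ⟨mem_V3.2 ?_, hIV h, vr, by simp, ?_⟩
  · show 0 ≤ a ∧ 0 ≤ b ∧ 0 ≤ c ∧ a + b + c ≤ (n:ℤ) - 2
    omega
  · simp only [vr, Prod.mk_add_mk, Prod.mk.injEq]
    simp

lemma g_down {a b c : ℤ} (h : (a, b, c) ∈ I) (hb : 1 ≤ b) : (a, b - 1, c) ∈ I := by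
  apply hstep (a, b - 1, c) (a, b, c) _ h
  have hV := mem_V3.1 (hIV h)
  simp only at hV
  refine ⟨mem_V3.2 ?_, hIV h, vg, by simp, ?_⟩
  · show 0 ≤ a ∧ 0 ≤ b - 1 ∧ 0 ≤ c ∧ a + (b - 1) + c ≤ (n:ℤ) - 2
    omega
  · simp only [vg, Prod.mk_add_mk, Prod.mk.injEq]
    refine ⟨by ring, by ring, by ring⟩

lemma b_down {a b c : ℤ} (h : (a, b, c) ∈ I) (hb : 1 ≤ b) : (a + 1, b - 1, c) ∈ I := by
  apply hstep (a + 1, b - 1, c) (a, b, c) _ h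
  have hV := mem_V3.1 (hIV h)
  simp only at hV
  refine ⟨mem_V3.2 ?_, hIV h, vb, by simp, ?_⟩
  · show 0 ≤ a + 1 ∧ 0 ≤ b - 1 ∧ 0 ≤ c ∧ (a + 1) + (b - 1) + c ≤ (n:ℤ) - 2
    omega
  · simp only [vb, Prod.mk_add_mk, Prod.mk.injEq]
    refine ⟨by ring, by ring, by ring⟩

lemma g_down_iter {a b c : ℤ} (h : (a, b, c) ∈ I) :
    ∀ (k : ℕ) (b' : ℤ), 0 ≤ b' → b' + k = b → (a, b', c) ∈ I := by
  intro k
  induction k with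
  | zero => intro b' _ hb'; rwa [show b' = b by omega]
  | succ k ih =>
    intro b' hb' hbk
    have h1 : (a, b' + 1, c) ∈ I := ih (b' + 1) (by omega) (by push_cast; omega)
    have h2 := g_down hIV hstep h1 (by omega)
    rwa [show b' + 1 - 1 = b' by ring] at h2

lemma mem_I_iff (a b c : ℤ) : (a, b, c) ∈ I ↔ 0 ≤ b ∧ b < (colI I c a : ℤ) := by
  constructor
  · intro h
    have hV := mem_V3.1 (hIV h)
    simp only at hV
    refine ⟨hV.2.1, ?_⟩
    have hsub : (Finset.range (b.toNat + 1)).image (fun k : ℕ => (a, (k:ℤ), c)) ⊆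
        I.filter (fun v => v.1 = a ∧ v.2.2 = c) := by
      intro v hv
      simp only [Finset.mem_image, Finset.mem_range] at hv
      obtain ⟨k, hk, rfl⟩ := hv
      refine Finset.mem_filter.2 ⟨?_, rfl, rfl⟩
      exact g_down_iter hIV hstep h (b - k).toNat (k:ℤ) (Int.natCast_nonneg k) (by omega)
    have hcard := Finset.card_le_card hsub
    rw [Finset.card_image_of_injOn (by
      intro x _ y _ hxy
      simp only [Prod.ext_iff] at hxy
      exact_mod_cast hxy.2.1), Finset.card_range] at hcard
    unfold colI
    omega
  · rintro ⟨hb0, hlt⟩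
    by_contra hmem
    have hsub : I.filter (fun v => v.1 = a ∧ v.2.2 = c) ⊆
        (Finset.range b.toNat).image (fun k : ℕ => (a, (k:ℤ), c)) := by
      intro v hv
      simp only [Finset.mem_filter] at hv
      obtain ⟨hvI, hva, hvc⟩ := hv
      have hv0 : 0 ≤ v.2.1 := (mem_V3.1 (hIV hvI)).2.1
      have hveq : (v.1, v.2.1, v.2.2) = v := rfl
      have hvb : v.2.1 < b := by
        by_contra hge
        apply hmem
        have h1 : (a, v.2.1, c) ∈ I := by rw [← hva, ← hvc]; rwa [hveq]
        exact g_down_iter hIV hstep h1 (v.2.1 - b).toNat b hb0 (by omega)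
      simp only [Finset.mem_image, Finset.mem_range]
      refine ⟨v.2.1.toNat, by omega, ?_⟩
      rw [Int.toNat_of_nonneg hv0, ← hva, ← hvc]
    have hcard := Finset.card_le_card hsub
    have h2 := Finset.card_image_le (s := Finset.range b.toNat) (f := fun k : ℕ => (a, (k:ℤ), c))
    rw [Finset.card_range] at h2
    unfold colI at hlt
    omega

lemma colI_succ_le {a c : ℤ} (ha : 0 ≤ a) : colI I c (a + 1) ≤ colI I c a := by
  rcases Nat.eq_zero_or_pos (colI I c (a + 1)) with h | h
  · omega
  · have h1 : (a + 1, (colI I c (a + 1) : ℤ) - 1, c) ∈ I :=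
      (mem_I_iff hIV hstep _ _ _).2 ⟨by omega, by omega⟩
    have h2 := r_down hIV hstep h1 ha
    have h3 := ((mem_I_iff hIV hstep _ _ _).1 h2).2
    omega

lemma colI_le_succ {a c : ℤ} : colI I c a ≤ colI I c (a + 1) + 1 := by
  rcases Nat.lt_or_ge (colI I c a) 2 with h | h
  · omega
  · have h1 : (a, (colI I c a : ℤ) - 1, c) ∈ I :=
      (mem_I_iff hIV hstep _ _ _).2 ⟨by omega, by omega⟩
    have h2 := b_down hIV hstep h1 (by omega)
    have h3 := ((mem_I_iff hIV hstep _ _ _).1 h2).2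
    omega

lemma colI_vanish {a c : ℤ} (h : (n:ℤ) - 1 ≤ a + c) : colI I c a = 0 := by
  unfold colI
  rw [Finset.card_eq_zero, Finset.filter_eq_empty_iff]
  intro v hv hp
  have hV := mem_V3.1 (hIV hv)
  omega

end Surj

/-- The subset of `Pn n` associated to an ideal `I`. -/
def AI (n : ℕ) (I : Finset (ℤ × ℤ × ℤ)) : Finset (ℕ × ℕ) :=
  (Pn n).filter (fun p => colI I (p.2:ℤ) ((p.1:ℤ) - 1) ≠ colI I (p.2:ℤ) (p.1:ℤ))

section Surj2

variable {n : ℕ} {I : Finset (ℤ × ℤ × ℤ)} (hIV : I ⊆ V3 n)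
  (hstep : ∀ u v, step3 {vr, vb, vg} (V3 n) u v → v ∈ I → u ∈ I)

include hIV hstep

lemma cnt_AI {c : ℤ} (hc : 0 ≤ c) :
    ∀ (m : ℕ) (a : ℤ), 0 ≤ a → (n:ℤ) - 1 ≤ a + m → cnt (AI n I) c a = colI I c a := by
  intro m
  induction m with
  | zero =>
    intro a ha hle
    have h1 : colI I c a = 0 := colI_vanish hIV hstep (by omega)
    have h2 : cnt (AI n I) c a = 0 := by
      unfold cnt
      rw [Finset.card_eq_zero, Finset.filter_eq_empty_iff]
      intro p hp hcond
      have hP := mem_Pn.1 (Finset.filter_subset _ _ hp)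
      omega
    omega
  | succ m ih =>
    intro a ha hle
    have hmono := colI_succ_le hIV hstep (a := a) (c := c) ha
    have hstep1 := colI_le_succ hIV hstep (a := a) (c := c)
    have e1 : cnt (AI n I) c a
        = cnt (AI n I) c (a + 1) + (if ((a+1).toNat, c.toNat) ∈ AI n I then 1 else 0) := by
      have h := cnt_pred (AI n I) hc (a + 1).toNat
      rw [Int.toNat_of_nonneg (by omega : (0:ℤ) ≤ a + 1)] at h
      rwa [show a + 1 - 1 = a by ring] at h
    have hmemiff : (((a+1).toNat, c.toNat) ∈ AI n I) ↔ colI I c a ≠ colI I c (a + 1) := by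
      unfold AI
      rw [Finset.mem_filter]
      constructor
      · rintro ⟨hP, hne⟩
        have hne' : colI I ((c.toNat : ℤ)) (((a+1).toNat : ℤ) - 1)
            ≠ colI I ((c.toNat : ℤ)) (((a+1).toNat : ℤ)) := hne
        rw [Int.toNat_of_nonneg (by omega : (0:ℤ) ≤ a + 1), Int.toNat_of_nonneg hc,
          show a + 1 - 1 = a by ring] at hne'
        exact hne'
      · intro hne
        have h1 : 1 ≤ colI I c a := by omega
        have hmem0 : (a, 0, c) ∈ I := (mem_I_iff hIV hstep _ _ _).2 ⟨le_refl 0, by omega⟩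
        have hV := mem_V3.1 (hIV hmem0)
        simp only at hV
        refine ⟨mem_Pn.2 ?_, ?_⟩
        · show 1 ≤ (a+1).toNat ∧ (a+1).toNat + c.toNat + 1 ≤ n
          omega
        · show colI I ((c.toNat : ℤ)) (((a+1).toNat : ℤ) - 1)
            ≠ colI I ((c.toNat : ℤ)) (((a+1).toNat : ℤ))
          rw [Int.toNat_of_nonneg (by omega : (0:ℤ) ≤ a + 1), Int.toNat_of_nonneg hc,
            show a + 1 - 1 = a by ring]
          exact hne
    have e2 : colI I c a
        = colI I c (a + 1) + (if ((a+1).toNat, c.toNat) ∈ AI n I then 1 else 0) := by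
      by_cases hd : ((a+1).toNat, c.toNat) ∈ AI n I
      · have := hmemiff.1 hd
        rw [if_pos hd]
        omega
      · have := (not_iff_not.2 hmemiff).1 hd
        rw [if_neg hd]
        omega
    rw [e1, e2, ih (a + 1) (by omega) (by push_cast; omega)]

lemma Phi_AI : Phi n (AI n I) = I := by
  ext v
  rw [mem_Phi]
  obtain ⟨a, b, c⟩ := v
  constructor
  · rintro ⟨hV, hlt⟩
    have hV' := mem_V3.1 hV
    simp only at hV' hlt
    rw [cnt_AI hIV hstep hV'.2.2.1 n a hV'.1 (by omega)] at hlt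
    exact (mem_I_iff hIV hstep _ _ _).2 ⟨hV'.2.1, hlt⟩
  · intro hI
    have hV := hIV hI
    have hV' := mem_V3.1 hV
    simp only at hV'
    have hb := ((mem_I_iff hIV hstep _ _ _).1 hI).2
    refine ⟨hV, ?_⟩
    show (b : ℤ) < (cnt (AI n I) c a : ℤ)
    rw [cnt_AI hIV hstep hV'.2.2.1 n a hV'.1 (by omega)]
    exact hb

end Surj2

lemma ideals_eq (n : ℕ) :
    ideals3 {vr, vb, vg} (V3 n) = ((Pn n).powerset).image (Phi n) := by
  apply Finset.Subset.antisymm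
  · intro I hI
    rw [ideals3, Finset.mem_filter, Finset.mem_powerset] at hI
    obtain ⟨hIV, hIdeal⟩ := hI
    have hstep := step_of_ideal hIdeal
    exact Finset.mem_image.2 ⟨AI n I, Finset.mem_powerset.2 (Finset.filter_subset _ _),
      Phi_AI hIV hstep⟩
  · intro J hJ
    obtain ⟨A, hA, rfl⟩ := Finset.mem_image.1 hJ
    exact Phi_mem_ideals (Finset.mem_powerset.1 hA)

lemma maps_to_Icc {n : ℕ} : ∀ p ∈ Pn n, p.1 ∈ Finset.Icc 1 (n - 1) := by
  intro p hp
  have := mem_Pn.1 hp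
  rw [Finset.mem_Icc]
  omega

lemma fiber_card {n : ℕ} {j : ℕ} (hj : j ∈ Finset.Icc 1 (n - 1)) :
    ((Pn n).filter (fun p => p.1 = j)).card = n - j := by
  rw [Finset.mem_Icc] at hj
  have hn : 1 ≤ n := by omega
  have hfib : (Pn n).filter (fun p => p.1 = j)
      = (Finset.range (n - j)).image (fun c => (j, c)) := by
    ext p
    simp only [Finset.mem_filter, mem_Pn, Finset.mem_image, Finset.mem_range]
    constructor
    · rintro ⟨⟨h1, h2⟩, h3⟩
      exact ⟨p.2, by omega, by rw [← h3]⟩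
    · rintro ⟨c, hc, rfl⟩
      exact ⟨⟨by omega, by omega⟩, rfl⟩
  rw [hfib, Finset.card_image_of_injective _ (fun x y hxy => by
    simpa using congrArg Prod.snd hxy), Finset.card_range]

lemma card_Pn {n : ℕ} (hn : 1 ≤ n) : (Pn n).card = n.choose 2 := by
  rw [Finset.card_eq_sum_card_fiberwise maps_to_Icc]
  rw [Finset.sum_congr rfl (fun j hj => fiber_card hj)]
  have h1 : ∑ j ∈ Finset.Icc 1 (n - 1), (n - j) = ∑ j ∈ Finset.Icc 1 (n - 1), j := by
    apply Finset.sum_nbij' (i := fun j => n - j) (j := fun j => n - j)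
    · intro a ha
      rw [Finset.mem_Icc] at ha ⊢
      omega
    · intro a ha
      rw [Finset.mem_Icc] at ha ⊢
      omega
    · intro a ha
      rw [Finset.mem_Icc] at ha
      omega
    · intro a ha
      rw [Finset.mem_Icc] at ha
      omega
    · intro a _
      rfl
  have e : Finset.Ico 1 n = Finset.Icc 1 (n - 1) := by
    rw [← Finset.Ico_add_one_right_eq_Icc]
    congr 1
    omega
  have h2 : ∑ j ∈ Finset.range n, j = ∑ j ∈ Finset.Icc 1 (n - 1), j := by
    rw [Finset.range_eq_Ico, Finset.sum_eq_sum_Ico_succ_bot (by omega : 0 < n) (fun j => j), e,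
      zero_add]
  have h3 := Finset.sum_range_id_mul_two n
  rw [h1, Nat.choose_two_right]
  omega

lemma Phi_injOn' {n : ℕ} : ∀ A ∈ (Pn n).powerset, ∀ A' ∈ (Pn n).powerset,
    Phi n A = Phi n A' → A = A' := fun A hA A' hA' h =>
  Phi_inj (Finset.mem_powerset.1 hA) (Finset.mem_powerset.1 hA') h

lemma genF_eq {n : ℕ} :
    genF3 {vr, vb, vg} (V3 n) = ∏ p ∈ Pn n, (1 + Polynomial.X ^ p.1 : Polynomial ℤ) := by
  rw [genF3, ideals_eq n, Finset.sum_image Phi_injOn']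
  have step1 : ∀ A ∈ (Pn n).powerset, (Polynomial.X : Polynomial ℤ) ^ (Phi n A).card
      = ∏ p ∈ A, (Polynomial.X : Polynomial ℤ) ^ p.1 := by
    intro A hA
    rw [card_Phi (Finset.mem_powerset.1 hA), Finset.prod_pow_eq_pow_sum]
  rw [Finset.sum_congr rfl step1]
  have step2 : ∏ p ∈ Pn n, ((Polynomial.X : Polynomial ℤ) ^ p.1 + 1)
      = ∑ A ∈ (Pn n).powerset, ∏ p ∈ A, (Polynomial.X : Polynomial ℤ) ^ p.1 := by
    rw [Finset.prod_add]
    exact Finset.sum_congr rfl (fun t _ => by simp)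
  rw [← step2]
  exact Finset.prod_congr rfl (fun p _ => add_comm _ _)

end Stmt8Aux

/-- The rank generating function of `J(T_n({r,b,g}))` is
`∏_{j=1}^{n-1} (1+q^j)^{n-j}`; in particular the number of order ideals is
`2^(binomial(n,2))`. -/
theorem stmt8 (n : ℕ) (hn : 1 ≤ n) :
    genF3 {vr, vb, vg} (V3 n) =
      (∏ j ∈ Finset.Icc 1 (n - 1), (1 + Polynomial.X ^ j) ^ (n - j)) ∧
    (ideals3 {vr, vb, vg} (V3 n)).card = 2 ^ (n.choose 2) := by
  constructor
  · rw [Stmt8Aux.genF_eq]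
    rw [← Finset.prod_fiberwise_of_maps_to Stmt8Aux.maps_to_Icc
      (fun p : ℕ × ℕ => (1 + Polynomial.X ^ p.1 : Polynomial ℤ))]
    apply Finset.prod_congr rfl
    intro j hj
    have hcongr : ∀ p ∈ (Stmt8Aux.Pn n).filter (fun p => p.1 = j),
        (1 + Polynomial.X ^ p.1 : Polynomial ℤ) = 1 + Polynomial.X ^ j := by
      intro p hp
      rw [(Finset.mem_filter.1 hp).2]
    rw [Finset.prod_congr rfl hcongr, Finset.prod_const, Stmt8Aux.fiber_card hj]
  · rw [Stmt8Aux.ideals_eq n, Finset.card_image_of_injOn (fun A hA A' hA' h =>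
      Stmt8Aux.Phi_inj (Finset.mem_powerset.1 (Finset.mem_coe.1 hA))
        (Finset.mem_powerset.1 (Finset.mem_coe.1 hA')) h),
      Finset.card_powerset, Stmt8Aux.card_Pn hn]
end

section
/- For every integer n ≥ 1, the number of totally symmetric self-complementary plane partitions inside a 2n×2n×2n box equals the number of order ideals of the four-color tetrahedral poset T_n({r,g,o,y}). -/
open scoped Classical

noncomputable section

/-- A plane partition in the box `{1,…,m}³`: a subset of the box that is downward
closed in each coordinate (within positive coordinates). -/
def IsPP (m : ℕ) (π : Set (ℕ × ℕ × ℕ)) : Prop :=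
  (∀ p ∈ π, (1 ≤ p.1 ∧ p.1 ≤ m) ∧ (1 ≤ p.2.1 ∧ p.2.1 ≤ m) ∧ (1 ≤ p.2.2 ∧ p.2.2 ≤ m)) ∧
  (∀ i j k i' j' k', (i, j, k) ∈ π → 1 ≤ i' → i' ≤ i → 1 ≤ j' → j' ≤ j →
    1 ≤ k' → k' ≤ k → (i', j', k') ∈ π)

/-- Totally symmetric: closed under all permutations of the three coordinates. -/
def IsTS (π : Set (ℕ × ℕ × ℕ)) : Prop :=
  ∀ i j k, (i, j, k) ∈ π →
    (i, k, j) ∈ π ∧ (j, i, k) ∈ π ∧ (j, k, i) ∈ π ∧ (k, i, j) ∈ π ∧ (k, j, i) ∈ π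

/-- Self-complementary in the `2n`-box:
`(i,j,k) ∈ π ↔ (2n+1-i, 2n+1-j, 2n+1-k) ∉ π`. -/
def IsSC (n : ℕ) (π : Set (ℕ × ℕ × ℕ)) : Prop :=
  ∀ i j k, 1 ≤ i → i ≤ 2 * n → 1 ≤ j → j ≤ 2 * n → 1 ≤ k → k ≤ 2 * n →
    ((i, j, k) ∈ π ↔ (2 * n + 1 - i, 2 * n + 1 - j, 2 * n + 1 - k) ∉ π)

/-- A totally symmetric self-complementary plane partition in a `2n×2n×2n` box. -/
def IsTSSCPP (n : ℕ) (π : Set (ℕ × ℕ × ℕ)) : Prop :=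
  IsPP (2 * n) π ∧ IsTS π ∧ IsSC n π

end


namespace TSSAux

open Finset

abbrev SS : Set (ℤ × ℤ × ℤ) := {vr, vg, vo, vy}

/-- The membership formula on sorted triples. -/
def Qf (n : ℕ) (I : Finset (ℤ × ℤ × ℤ)) (x y z : ℤ) : Prop :=
  (x + z ≤ 2*(n:ℤ) ∧ (y ≤ (n:ℤ) ∨ (z - y, x - 1, y - (n:ℤ) - 1) ∈ I)) ∨
  (x + z = 2*(n:ℤ) + 1 ∧ y ≤ (n:ℤ)) ∨
  (2*(n:ℤ) + 2 ≤ x + z ∧ y ≤ (n:ℤ) ∧ (y - x, 2*(n:ℤ) - z, (n:ℤ) - y) ∉ I)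

/-- The TSSCPP attached to an ideal. -/
def piI (n : ℕ) (I : Finset (ℤ × ℤ × ℤ)) : Set (ℕ × ℕ × ℕ) :=
  {p | (1 ≤ p.1 ∧ p.1 ≤ 2*n) ∧ (1 ≤ p.2.1 ∧ p.2.1 ≤ 2*n) ∧ (1 ≤ p.2.2 ∧ p.2.2 ≤ 2*n) ∧
    Qf n I (min (p.1:ℤ) (min (p.2.1:ℤ) (p.2.2:ℤ)))
      ((p.1:ℤ) + (p.2.1:ℤ) + (p.2.2:ℤ) - min (p.1:ℤ) (min (p.2.1:ℤ) (p.2.2:ℤ))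
        - max (p.1:ℤ) (max (p.2.1:ℤ) (p.2.2:ℤ)))
      (max (p.1:ℤ) (max (p.2.1:ℤ) (p.2.2:ℤ)))}

def phiv (n : ℕ) (v : ℤ × ℤ × ℤ) : ℕ × ℕ × ℕ :=
  (v.2.1.toNat + 1, n + 1 + v.2.2.toNat, n + 1 + v.1.toNat + v.2.2.toNat)

noncomputable def Iof (n : ℕ) (π : Set (ℕ × ℕ × ℕ)) : Finset (ℤ × ℤ × ℤ) :=
  (V3 n).filter (fun v => phiv n v ∈ π)

lemma mem_V3 {n : ℕ} {v : ℤ × ℤ × ℤ} :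
    v ∈ V3 n ↔ 0 ≤ v.1 ∧ 0 ≤ v.2.1 ∧ 0 ≤ v.2.2 ∧ v.1 + v.2.1 + v.2.2 ≤ (n:ℤ) - 2 := by
  obtain ⟨a, b, c⟩ := v
  simp only [V3, Finset.mem_filter, Finset.mem_product, Finset.mem_Icc]
  omega

lemma mem_V3' {n : ℕ} {a b c : ℤ} :
    ((a, b, c) ∈ V3 n) ↔ 0 ≤ a ∧ 0 ≤ b ∧ 0 ≤ c ∧ a + b + c ≤ (n:ℤ) - 2 :=
  mem_V3

lemma step_r {n : ℕ} {I : Finset (ℤ × ℤ × ℤ)} (hI : IsIdeal3 SS (V3 n) I) {a b c : ℤ}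
    (ha : 0 ≤ a) (hb : 0 ≤ b) (hc : 0 ≤ c) (h : (a + 1, b, c) ∈ I) : (a, b, c) ∈ I := by
  have hv : (a + 1, b, c) ∈ V3 n := hI.1 h
  rw [mem_V3] at hv
  have hu : (a, b, c) ∈ V3 n := mem_V3.mpr ⟨ha, hb, hc, by simp at hv ⊢; omega⟩
  refine hI.2 _ _ ⟨hu, hI.1 h, Relation.ReflTransGen.single ⟨hu, hI.1 h, vr, by simp, ?_⟩⟩ h
  simp [vr, Prod.ext_iff]

lemma step_g {n : ℕ} {I : Finset (ℤ × ℤ × ℤ)} (hI : IsIdeal3 SS (V3 n) I) {a b c : ℤ}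
    (ha : 0 ≤ a) (hb : 0 ≤ b) (hc : 0 ≤ c) (h : (a, b + 1, c) ∈ I) : (a, b, c) ∈ I := by
  have hv : (a, b + 1, c) ∈ V3 n := hI.1 h
  rw [mem_V3] at hv
  have hu : (a, b, c) ∈ V3 n := mem_V3.mpr ⟨ha, hb, hc, by simp at hv ⊢; omega⟩
  refine hI.2 _ _ ⟨hu, hI.1 h, Relation.ReflTransGen.single ⟨hu, hI.1 h, vg, by simp, ?_⟩⟩ h
  simp [vg, Prod.ext_iff]

lemma step_o {n : ℕ} {I : Finset (ℤ × ℤ × ℤ)} (hI : IsIdeal3 SS (V3 n) I) {a b c : ℤ}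
    (ha : 0 ≤ a) (hb : 0 ≤ b) (hc : 0 ≤ c) (h : (a, b, c + 1) ∈ I) : (a + 1, b, c) ∈ I := by
  have hv : (a, b, c + 1) ∈ V3 n := hI.1 h
  rw [mem_V3] at hv
  have hu : (a + 1, b, c) ∈ V3 n := mem_V3.mpr ⟨by omega, hb, hc, by simp at hv ⊢; omega⟩
  refine hI.2 _ _ ⟨hu, hI.1 h, Relation.ReflTransGen.single ⟨hu, hI.1 h, vo, by simp, ?_⟩⟩ h
  simp [vo, Prod.ext_iff]

lemma Qdx {n : ℕ} {I : Finset (ℤ × ℤ × ℤ)} (hI : IsIdeal3 SS (V3 n) I) {x y z : ℤ}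
    (hx : 2 ≤ x) (hxy : x ≤ y) (hyz : y ≤ z) (hz : z ≤ 2*(n:ℤ))
    (h : Qf n I x y z) : Qf n I (x - 1) y z := by
  simp only [Qf] at h ⊢
  rcases h with ⟨hS, hy | hA⟩ | ⟨hS, hy⟩ | ⟨hS, hy, hA⟩
  · exact Or.inl ⟨by omega, Or.inl hy⟩
  · by_cases hy' : y ≤ (n:ℤ)
    · exact Or.inl ⟨by omega, Or.inl hy'⟩
    · have h2 : (z - y, x - 1 - 1, y - (n:ℤ) - 1) ∈ I := by
        refine step_g hI (by omega) (by omega) (by omega) ?_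
        rw [show x - 1 - 1 + 1 = x - 1 by ring]
        exact hA
      exact Or.inl ⟨by omega, Or.inr h2⟩
  · exact Or.inl ⟨by omega, Or.inl hy⟩
  · by_cases hb : 2*(n:ℤ) + 2 ≤ x - 1 + z
    · refine Or.inr (Or.inr ⟨hb, hy, fun hm => hA ?_⟩)
      have := step_r hI (show (0:ℤ) ≤ y - x from by omega)
        (show (0:ℤ) ≤ 2*(n:ℤ) - z from by omega) (show (0:ℤ) ≤ (n:ℤ) - y from by omega)
        (by rw [show y - x + 1 = y - (x-1) by ring]; exact hm)
      exact this
    · exact Or.inr (Or.inl ⟨by omega, hy⟩)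

lemma Qdy {n : ℕ} {I : Finset (ℤ × ℤ × ℤ)} (hI : IsIdeal3 SS (V3 n) I) {x y z : ℤ}
    (hx : 1 ≤ x) (hxy : x ≤ y - 1) (hyz : y ≤ z) (hz : z ≤ 2*(n:ℤ))
    (h : Qf n I x y z) : Qf n I x (y - 1) z := by
  simp only [Qf] at h ⊢
  rcases h with ⟨hS, hy | hA⟩ | ⟨hS, hy⟩ | ⟨hS, hy, hA⟩
  · exact Or.inl ⟨hS, Or.inl (by omega)⟩
  · by_cases hy' : y - 1 ≤ (n:ℤ)
    · exact Or.inl ⟨hS, Or.inl hy'⟩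
    · have h2 : (z - y + 1, x - 1, y - (n:ℤ) - 2) ∈ I :=
        step_o hI (by omega) (by omega) (by omega)
          (by rw [show y - (n:ℤ) - 2 + 1 = y - n - 1 by ring]; exact hA)
      refine Or.inl ⟨hS, Or.inr ?_⟩
      rw [show z - (y - 1) = z - y + 1 by ring, show y - 1 - (n:ℤ) - 1 = y - n - 2 by ring]
      exact h2
  · exact Or.inr (Or.inl ⟨hS, by omega⟩)
  · refine Or.inr (Or.inr ⟨hS, by omega, fun hm => hA ?_⟩)
    have := step_o hI (show (0:ℤ) ≤ y - 1 - x from by omega)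
      (show (0:ℤ) ≤ 2*(n:ℤ) - z from by omega) (show (0:ℤ) ≤ (n:ℤ) - y from by omega)
      (by rw [show (n:ℤ) - y + 1 = n - (y - 1) by ring]; exact hm)
    rw [show y - 1 - x + 1 = y - x by ring] at this
    exact this

lemma Qdz {n : ℕ} {I : Finset (ℤ × ℤ × ℤ)} (hI : IsIdeal3 SS (V3 n) I) {x y z : ℤ}
    (hx : 1 ≤ x) (hxy : x ≤ y) (hyz : y ≤ z - 1) (hz : z ≤ 2*(n:ℤ))
    (h : Qf n I x y z) : Qf n I x y (z - 1) := by
  simp only [Qf] at h ⊢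
  rcases h with ⟨hS, hy | hA⟩ | ⟨hS, hy⟩ | ⟨hS, hy, hA⟩
  · exact Or.inl ⟨by omega, Or.inl hy⟩
  · by_cases hy' : y ≤ (n:ℤ)
    · exact Or.inl ⟨by omega, Or.inl hy'⟩
    · have h2 : (z - 1 - y, x - 1, y - (n:ℤ) - 1) ∈ I :=
        step_r hI (by omega) (by omega) (by omega)
          (by rw [show z - 1 - y + 1 = z - y by ring]; exact hA)
      exact Or.inl ⟨by omega, Or.inr h2⟩
  · exact Or.inl ⟨by omega, Or.inl hy⟩
  · by_cases hb : 2*(n:ℤ) + 2 ≤ x + (z - 1)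
    · refine Or.inr (Or.inr ⟨hb, hy, fun hm => hA ?_⟩)
      have := step_g hI (show (0:ℤ) ≤ y - x from by omega)
        (show (0:ℤ) ≤ 2*(n:ℤ) - z from by omega) (show (0:ℤ) ≤ (n:ℤ) - y from by omega)
        (by rw [show 2*(n:ℤ) - z + 1 = 2*n - (z - 1) by ring]; exact hm)
      exact this
    · exact Or.inr (Or.inl ⟨by omega, hy⟩)

lemma Q_mono {n : ℕ} {I : Finset (ℤ × ℤ × ℤ)} (hI : IsIdeal3 SS (V3 n) I) (d : ℕ) :
    ∀ x y z x' y' z' : ℤ, x + y + z ≤ x' + y' + z' + d →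
      1 ≤ x' → x' ≤ y' → y' ≤ z' → x' ≤ x → y' ≤ y → z' ≤ z → x ≤ y → y ≤ z →
      z ≤ 2*(n:ℤ) → Qf n I x y z → Qf n I x' y' z' := by
  induction d with
  | zero =>
    intro x y z x' y' z' hsum h1 h2 h3 h4 h5 h6 h7 h8 h9 h
    obtain ⟨rfl, rfl, rfl⟩ : x = x' ∧ y = y' ∧ z = z' := by omega
    exact h
  | succ d ih =>
    intro x y z x' y' z' hsum h1 h2 h3 h4 h5 h6 h7 h8 h9 h
    by_cases e1 : x' < x
    · exact ih (x-1) y z x' y' z' (by omega) h1 h2 h3 (by omega) h5 h6 (by omega) h8 h9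
        (Qdx hI (by omega) h7 h8 h9 h)
    · by_cases e2 : y' < y
      · exact ih x (y-1) z x' y' z' (by omega) h1 h2 h3 h4 (by omega) h6 (by omega)
          (by omega) h9 (Qdy hI (by omega) (by omega) h8 h9 h)
      · by_cases e3 : z' < z
        · exact ih x y (z-1) x' y' z' (by omega) h1 h2 h3 h4 h5 (by omega) h7
            (by omega) (by omega) (Qdz hI (by omega) h7 (by omega) h9 h)
        · obtain ⟨rfl, rfl, rfl⟩ : x = x' ∧ y = y' ∧ z = z' := by omega
          exact h

lemma Q_compl {n : ℕ} {I : Finset (ℤ × ℤ × ℤ)} {x y z : ℤ}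
    (hx : 1 ≤ x) (hxy : x ≤ y) (hyz : y ≤ z) (hz : z ≤ 2*(n:ℤ)) :
    Qf n I x y z ↔ ¬ Qf n I (2*(n:ℤ)+1-z) (2*(n:ℤ)+1-y) (2*(n:ℤ)+1-x) := by
  have e1 : (2*(n:ℤ)+1-x - (2*(n:ℤ)+1-y), 2*(n:ℤ)+1-z - 1, 2*(n:ℤ)+1-y - (n:ℤ) - 1)
      = (y - x, 2*(n:ℤ) - z, (n:ℤ) - y) := by
    simp only [Prod.mk.injEq]; refine ⟨by ring, by ring, by ring⟩
  have e2 : (2*(n:ℤ)+1-y - (2*(n:ℤ)+1-z), 2*(n:ℤ) - (2*(n:ℤ)+1-x), (n:ℤ) - (2*(n:ℤ)+1-y))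
      = (z - y, x - 1, y - (n:ℤ) - 1) := by
    simp only [Prod.mk.injEq]; refine ⟨by ring, by ring, by ring⟩
  simp only [Qf, e1, e2]
  by_cases hP : (z - y, x - 1, y - (n:ℤ) - 1) ∈ I <;>
    by_cases hQ : (y - x, 2*(n:ℤ) - z, (n:ℤ) - y) ∈ I <;>
      simp [hP, hQ] <;> omega


lemma mem_piI_of {n : ℕ} {I : Finset (ℤ × ℤ × ℤ)} {i j k i' j' k' : ℕ}
    (hp : (i, j, k) ∈ piI n I)
    (hb1 : 1 ≤ i' ∧ i' ≤ 2*n) (hb2 : 1 ≤ j' ∧ j' ≤ 2*n) (hb3 : 1 ≤ k' ∧ k' ≤ 2*n)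
    (h1 : min (i':ℤ) (min (j':ℤ) (k':ℤ)) = min (i:ℤ) (min (j:ℤ) (k:ℤ)))
    (h2 : (i':ℤ) + (j':ℤ) + (k':ℤ) = (i:ℤ) + (j:ℤ) + (k:ℤ))
    (h3 : max (i':ℤ) (max (j':ℤ) (k':ℤ)) = max (i:ℤ) (max (j:ℤ) (k:ℤ))) :
    (i', j', k') ∈ piI n I := by
  simp only [piI, Set.mem_setOf_eq] at hp ⊢
  refine ⟨hb1, hb2, hb3, ?_⟩
  rw [h1, h2, h3]
  exact hp.2.2.2

lemma piI_TS (n : ℕ) (I : Finset (ℤ × ℤ × ℤ)) : IsTS (piI n I) := by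
  intro i j k h
  have hb : (1 ≤ i ∧ i ≤ 2*n) ∧ (1 ≤ j ∧ j ≤ 2*n) ∧ (1 ≤ k ∧ k ≤ 2*n) := by
    simp only [piI, Set.mem_setOf_eq] at h
    exact ⟨h.1, h.2.1, h.2.2.1⟩
  obtain ⟨hb1, hb2, hb3⟩ := hb
  refine ⟨?_, ?_, ?_, ?_, ?_⟩ <;>
    exact mem_piI_of h (by omega) (by omega) (by omega) (by omega) (by push_cast; ring)
      (by omega)

lemma mem_piI_sorted {n : ℕ} {I : Finset (ℤ × ℤ × ℤ)} {x y z : ℕ}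
    (hx : 1 ≤ x) (hxy : x ≤ y) (hyz : y ≤ z) (hz : z ≤ 2*n) :
    ((x, y, z) ∈ piI n I) ↔ Qf n I (x:ℤ) (y:ℤ) (z:ℤ) := by
  simp only [piI, Set.mem_setOf_eq]
  have e1 : min (x:ℤ) (min (y:ℤ) (z:ℤ)) = (x:ℤ) := by omega
  have e3 : max (x:ℤ) (max (y:ℤ) (z:ℤ)) = (z:ℤ) := by omega
  rw [e1, e3, show (x:ℤ) + (y:ℤ) + (z:ℤ) - (x:ℤ) - (z:ℤ) = (y:ℤ) by ring]
  constructor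
  · exact fun h => h.2.2.2
  · exact fun h => ⟨⟨hx, by omega⟩, ⟨by omega, by omega⟩, ⟨by omega, by omega⟩, h⟩

lemma mem_piI_iff_sort {n : ℕ} {I : Finset (ℤ × ℤ × ℤ)} {i j k : ℕ}
    (hb1 : 1 ≤ i ∧ i ≤ 2*n) (hb2 : 1 ≤ j ∧ j ≤ 2*n) (hb3 : 1 ≤ k ∧ k ≤ 2*n)
    {x y z : ℕ}
    (hx : (x:ℤ) = min (i:ℤ) (min (j:ℤ) (k:ℤ)))
    (hz : (z:ℤ) = max (i:ℤ) (max (j:ℤ) (k:ℤ)))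
    (hy : (x:ℤ) + (y:ℤ) + (z:ℤ) = (i:ℤ) + (j:ℤ) + (k:ℤ)) :
    ((i, j, k) ∈ piI n I) ↔ Qf n I (x:ℤ) (y:ℤ) (z:ℤ) := by
  rw [← mem_piI_sorted (show 1 ≤ x by omega) (show x ≤ y by omega) (show y ≤ z by omega)
    (show z ≤ 2*n by omega)]
  constructor
  · intro h
    exact mem_piI_of h (by omega) (by omega) (by omega) (by omega) (by omega) (by omega)
  · intro h
    exact mem_piI_of h hb1 hb2 hb3 (by omega) (by omega) (by omega)

lemma piI_SC (n : ℕ) (I : Finset (ℤ × ℤ × ℤ)) : IsSC n (piI n I) := by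
  intro i j k hi1 hi2 hj1 hj2 hk1 hk2
  set x := min i (min j k) with hxdef
  set z := max i (max j k) with hzdef
  set y := i + j + k - x - z with hydef
  have E1 : ((i, j, k) ∈ piI n I) ↔ Qf n I (x:ℤ) (y:ℤ) (z:ℤ) :=
    mem_piI_iff_sort ⟨hi1, hi2⟩ ⟨hj1, hj2⟩ ⟨hk1, hk2⟩ (by omega) (by omega) (by omega)
  have E2 : ((2*n+1-i, 2*n+1-j, 2*n+1-k) ∈ piI n I) ↔
      Qf n I ((2*n+1-z : ℕ):ℤ) ((2*n+1-y : ℕ):ℤ) ((2*n+1-x : ℕ):ℤ) :=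
    mem_piI_iff_sort ⟨by omega, by omega⟩ ⟨by omega, by omega⟩ ⟨by omega, by omega⟩
      (by omega) (by omega) (by omega)
  rw [E1, E2, show ((2*n+1-z : ℕ):ℤ) = 2*(n:ℤ)+1-(z:ℤ) from by omega,
    show ((2*n+1-y : ℕ):ℤ) = 2*(n:ℤ)+1-(y:ℤ) from by omega,
    show ((2*n+1-x : ℕ):ℤ) = 2*(n:ℤ)+1-(x:ℤ) from by omega]
  exact Q_compl (by omega) (by omega) (by omega) (by omega)

lemma piI_PP {n : ℕ} {I : Finset (ℤ × ℤ × ℤ)} (hI : IsIdeal3 SS (V3 n) I) :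
    IsPP (2*n) (piI n I) := by
  constructor
  · intro p hp
    simp only [piI, Set.mem_setOf_eq] at hp
    exact ⟨hp.1, hp.2.1, hp.2.2.1⟩
  · intro i j k i' j' k' h h1 h2 h3 h4 h5 h6
    simp only [piI, Set.mem_setOf_eq] at h ⊢
    obtain ⟨hbi, hbj, hbk, hq⟩ := h
    refine ⟨⟨h1, by omega⟩, ⟨h3, by omega⟩, ⟨h5, by omega⟩, ?_⟩
    refine Q_mono hI (i+j+k) _ _ _ _ _ _ ?_ ?_ ?_ ?_ ?_ ?_ ?_ ?_ ?_ ?_ hq <;> omega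

lemma tsscpp_piI {n : ℕ} {I : Finset (ℤ × ℤ × ℤ)} (hI : IsIdeal3 SS (V3 n) I) :
    IsTSSCPP n (piI n I) := ⟨piI_PP hI, piI_TS n I, piI_SC n I⟩



section TSlemmas

variable {π : Set (ℕ × ℕ × ℕ)} (hTS : IsTS π) {i j k : ℕ}

include hTS

lemma ts1 : (i,j,k) ∈ π ↔ (i,k,j) ∈ π :=
  ⟨fun h => (hTS _ _ _ h).1, fun h => (hTS _ _ _ h).1⟩

lemma ts2 : (i,j,k) ∈ π ↔ (j,i,k) ∈ π :=
  ⟨fun h => (hTS _ _ _ h).2.1, fun h => (hTS _ _ _ h).2.1⟩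

lemma ts3 : (i,j,k) ∈ π ↔ (j,k,i) ∈ π :=
  ⟨fun h => (hTS _ _ _ h).2.2.1, fun h => (hTS _ _ _ h).2.2.2.1⟩

lemma ts4 : (i,j,k) ∈ π ↔ (k,i,j) ∈ π :=
  ⟨fun h => (hTS _ _ _ h).2.2.2.1, fun h => (hTS _ _ _ h).2.2.1⟩

lemma ts5 : (i,j,k) ∈ π ↔ (k,j,i) ∈ π :=
  ⟨fun h => (hTS _ _ _ h).2.2.2.2, fun h => (hTS _ _ _ h).2.2.2.2⟩

lemma ts_sort {x y z : ℕ} (hx : x = min i (min j k)) (hz : z = max i (max j k))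
    (hy : x + y + z = i + j + k) : ((i,j,k) ∈ π ↔ (x,y,z) ∈ π) := by
  rcases le_total i j with h1 | h1 <;> rcases le_total j k with h2 | h2 <;>
    rcases le_total i k with h3 | h3
  · obtain ⟨rfl, rfl, rfl⟩ : x = i ∧ y = j ∧ z = k := by omega
    exact Iff.rfl
  · obtain ⟨rfl, rfl, rfl⟩ : x = i ∧ y = j ∧ z = k := by omega
    exact Iff.rfl
  · obtain ⟨rfl, rfl, rfl⟩ : x = i ∧ y = k ∧ z = j := by omega
    exact ts1 hTS
  · obtain ⟨rfl, rfl, rfl⟩ : x = k ∧ y = i ∧ z = j := by omega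
    exact ts4 hTS
  · obtain ⟨rfl, rfl, rfl⟩ : x = j ∧ y = i ∧ z = k := by omega
    exact ts2 hTS
  · obtain ⟨rfl, rfl, rfl⟩ : x = j ∧ y = k ∧ z = i := by omega
    exact ts3 hTS
  · obtain ⟨rfl, rfl, rfl⟩ : x = i ∧ y = j ∧ z = k := by omega
    exact Iff.rfl
  · obtain ⟨rfl, rfl, rfl⟩ : x = k ∧ y = j ∧ z = i := by omega
    exact ts5 hTS

end TSlemmas

section Claims

variable {n : ℕ} {π : Set (ℕ × ℕ × ℕ)} (hπ : IsTSSCPP n π)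

include hπ

lemma claimA {x y z : ℕ} (hx : 1 ≤ x) (hxy : x ≤ y) (hyz : y ≤ z) (hz : z ≤ 2*n)
    (hS : x + z ≤ 2*n + 1) (hy : y ≤ n) : (x, y, z) ∈ π := by
  by_contra hc
  have h1 : (2*n+1-x, 2*n+1-y, 2*n+1-z) ∈ π := by
    by_contra h2
    exact hc ((hπ.2.2 x y z hx (by omega) (by omega) (by omega) (by omega) hz).mpr h2)
  have h2 : (2*n+1-z, 2*n+1-y, 2*n+1-x) ∈ π := (ts5 hπ.2.1).mp h1
  exact hc (hπ.1.2 _ _ _ x y z h2 hx (by omega) (by omega) (by omega) (by omega) (by omega))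

lemma claimB {x y z : ℕ} (hx : 1 ≤ x) (hxy : x ≤ y) (hyz : y ≤ z) (hz : z ≤ 2*n)
    (hS : 2*n + 1 ≤ x + z) (hy : n + 1 ≤ y) : (x, y, z) ∉ π := by
  have hA : (2*n+1-z, 2*n+1-y, 2*n+1-x) ∈ π :=
    claimA hπ (by omega) (by omega) (by omega) (by omega) (by omega) (by omega)
  have h2 : (2*n+1-x, 2*n+1-y, 2*n+1-z) ∈ π := (ts5 hπ.2.1).mp hA
  intro hmem
  exact (hπ.2.2 x y z hx (by omega) (by omega) (by omega) (by omega) (by omega)).mp hmem h2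

end Claims

lemma keyR2 {n : ℕ} {π : Set (ℕ × ℕ × ℕ)} {x y z : ℕ}
    (hx : 1 ≤ x) (hxy : x ≤ y) (hyz : y ≤ z) (hz : z ≤ 2*n)
    (hS : x + z ≤ 2*n) (hy : n + 1 ≤ y) :
    ((x, y, z) ∈ π ↔ ((z:ℤ) - (y:ℤ), (x:ℤ) - 1, (y:ℤ) - (n:ℤ) - 1) ∈ Iof n π) := by
  have hphi : phiv n ((z:ℤ) - (y:ℤ), (x:ℤ) - 1, (y:ℤ) - (n:ℤ) - 1) = (x, y, z) := by
    simp only [phiv, Prod.mk.injEq]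
    refine ⟨by omega, by omega, by omega⟩
  rw [Iof, Finset.mem_filter, mem_V3', hphi]
  constructor
  · intro h
    exact ⟨⟨by omega, by omega, by omega⟩, h⟩
  · exact fun h => h.2

lemma mem_char {n : ℕ} {π : Set (ℕ × ℕ × ℕ)} (hπ : IsTSSCPP n π) {x y z : ℕ}
    (hx : 1 ≤ x) (hxy : x ≤ y) (hyz : y ≤ z) (hz : z ≤ 2*n) :
    ((x, y, z) ∈ π) ↔ Qf n (Iof n π) (x:ℤ) (y:ℤ) (z:ℤ) := by
  by_cases h1 : x + z ≤ 2*n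
  · by_cases h2 : y ≤ n
    · exact iff_of_true (claimA hπ hx hxy hyz hz (by omega) h2)
        (Or.inl ⟨by omega, Or.inl (by omega)⟩)
    · rw [keyR2 hx hxy hyz hz h1 (by omega)]
      constructor
      · exact fun h => Or.inl ⟨by omega, Or.inr h⟩
      · rintro (⟨hS, hA | hA⟩ | ⟨hS, hA⟩ | ⟨hS, hA, _⟩) <;> first | exact hA | omega
  · by_cases h2 : x + z = 2*n + 1
    · constructor
      · intro h
        have hy : y ≤ n := by
          by_contra hy
          exact claimB hπ hx hxy hyz hz (by omega) (by omega) h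
        exact Or.inr (Or.inl ⟨by omega, by omega⟩)
      · rintro (⟨hS, _⟩ | ⟨_, hy⟩ | ⟨hS, _, _⟩)
        · omega
        · exact claimA hπ hx hxy hyz hz (by omega) (by omega)
        · omega
    · have hcompiff : (x, y, z) ∈ π ↔ (2*n+1-z, 2*n+1-y, 2*n+1-x) ∉ π := by
        rw [hπ.2.2 x y z hx (by omega) (by omega) (by omega) (by omega) (by omega),
          ts5 hπ.2.1]
      by_cases h3 : y ≤ n
      · have hk : ((2*n+1-z, 2*n+1-y, 2*n+1-x) ∈ π ↔
            (((2*n+1-x : ℕ):ℤ) - ((2*n+1-y : ℕ):ℤ), ((2*n+1-z : ℕ):ℤ) - 1,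
              ((2*n+1-y : ℕ):ℤ) - (n:ℤ) - 1) ∈ Iof n π) :=
          keyR2 (by omega) (by omega) (by omega) (by omega) (by omega) (by omega)
        rw [show (((2*n+1-x : ℕ):ℤ) - ((2*n+1-y : ℕ):ℤ), ((2*n+1-z : ℕ):ℤ) - 1,
              ((2*n+1-y : ℕ):ℤ) - (n:ℤ) - 1)
            = ((y:ℤ) - (x:ℤ), 2*(n:ℤ) - (z:ℤ), (n:ℤ) - (y:ℤ)) from by
          simp only [Prod.mk.injEq]; refine ⟨by omega, by omega, by omega⟩] at hk
        rw [hcompiff, hk]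
        constructor
        · exact fun h => Or.inr (Or.inr ⟨by omega, by omega, h⟩)
        · rintro (⟨hS, _⟩ | ⟨hS, _⟩ | ⟨_, _, hA⟩) <;> first | exact hA | omega
      · refine iff_of_false ?_ ?_
        · rw [hcompiff]
          intro hc
          exact hc (claimA hπ (by omega) (by omega) (by omega) (by omega) (by omega)
            (by omega))
        · rintro (⟨hS, _⟩ | ⟨hS, _⟩ | ⟨_, hy, _⟩) <;> omega

lemma Iof_ideal {n : ℕ} {π : Set (ℕ × ℕ × ℕ)} (hπ : IsTSSCPP n π) :
    IsIdeal3 SS (V3 n) (Iof n π) := by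
  refine ⟨Finset.filter_subset _ _, ?_⟩
  rintro u v ⟨huW, hvW, hrtg⟩ hv
  clear huW hvW
  induction hrtg with
  | refl => exact hv
  | @tail b c hub hstep ih =>
    refine ih ?_
    obtain ⟨hbW, hcW, e, he, rfl⟩ := hstep
    obtain ⟨a1, a2, a3⟩ := b
    have hb' := mem_V3'.mp hbW
    have hphi := (Finset.mem_filter.mp hv).2
    refine Finset.mem_filter.mpr ⟨hbW, ?_⟩
    obtain ⟨hb1, hb2, hb3, hb4⟩ := hb'
    simp only [SS, Set.mem_insert_iff, Set.mem_singleton_iff] at he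
    rcases he with rfl | rfl | rfl | rfl
    · simp only [vr, Prod.mk_add_mk, add_zero] at hphi
      simp only [phiv] at hphi ⊢
      exact hπ.1.2 _ _ _ _ _ _ hphi (by omega) (by omega) (by omega) (by omega)
        (by omega) (by omega)
    · simp only [vg, Prod.mk_add_mk, add_zero] at hphi
      simp only [phiv] at hphi ⊢
      exact hπ.1.2 _ _ _ _ _ _ hphi (by omega) (by omega) (by omega) (by omega)
        (by omega) (by omega)
    · simp only [vo, Prod.mk_add_mk, add_zero] at hphi hcW
      have hc' := mem_V3'.mp hcW
      simp only [phiv] at hphi ⊢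
      exact hπ.1.2 _ _ _ _ _ _ hphi (by omega) (by omega) (by omega) (by omega)
        (by omega) (by omega)
    · simp only [vy, Prod.mk_add_mk, add_zero] at hphi
      simp only [phiv] at hphi ⊢
      exact hπ.1.2 _ _ _ _ _ _ hphi (by omega) (by omega) (by omega) (by omega)
        (by omega) (by omega)

lemma recon {n : ℕ} {π : Set (ℕ × ℕ × ℕ)} (hπ : IsTSSCPP n π) : piI n (Iof n π) = π := by
  ext p
  obtain ⟨i, j, k⟩ := p
  by_cases hb : (1 ≤ i ∧ i ≤ 2*n) ∧ (1 ≤ j ∧ j ≤ 2*n) ∧ (1 ≤ k ∧ k ≤ 2*n)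
  · set x := min i (min j k) with hxdef
    set z := max i (max j k) with hzdef
    set y := i + j + k - x - z with hydef
    have h1 : ((i,j,k) ∈ piI n (Iof n π)) ↔ Qf n (Iof n π) (x:ℤ) (y:ℤ) (z:ℤ) :=
      mem_piI_iff_sort hb.1 hb.2.1 hb.2.2 (by omega) (by omega) (by omega)
    have h2 : ((x,y,z) ∈ π) ↔ Qf n (Iof n π) (x:ℤ) (y:ℤ) (z:ℤ) :=
      mem_char hπ (by omega) (by omega) (by omega) (by omega)
    have h3 : ((i,j,k) ∈ π) ↔ (x,y,z) ∈ π := ts_sort hπ.2.1 hxdef hzdef (by omega)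
    rw [h1, h3, h2]
  · refine iff_of_false ?_ ?_
    · intro h
      simp only [piI, Set.mem_setOf_eq] at h
      exact hb ⟨h.1, h.2.1, h.2.2.1⟩
    · intro h
      exact hb (hπ.1.1 _ h)

lemma Iof_piI {n : ℕ} {I : Finset (ℤ × ℤ × ℤ)} (hI : IsIdeal3 SS (V3 n) I) :
    Iof n (piI n I) = I := by
  ext v
  obtain ⟨a, b, c⟩ := v
  rw [Iof, Finset.mem_filter, mem_V3']
  simp only [phiv]
  constructor
  · rintro ⟨⟨ha, hb, hc, hs⟩, hmem⟩
    rw [mem_piI_sorted (by omega) (by omega) (by omega) (by omega)] at hmem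
    rcases hmem with ⟨hS, hy | hA⟩ | ⟨hS, hy⟩ | ⟨hS, hy, _⟩
    · omega
    · convert hA using 2 <;>
        first
          | omega
          | exact Prod.ext_iff.mpr ⟨by omega, by omega⟩
          | exact Prod.ext_iff.mpr ⟨by omega, Prod.ext_iff.mpr ⟨by omega, by omega⟩⟩
    · omega
    · omega
  · intro hmem
    have hv := mem_V3'.mp (hI.1 hmem)
    obtain ⟨ha, hb, hc, hs⟩ := hv
    refine ⟨⟨ha, hb, hc, hs⟩, ?_⟩
    rw [mem_piI_sorted (by omega) (by omega) (by omega) (by omega)]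
    · refine Or.inl ⟨by omega, Or.inr ?_⟩
      convert hmem using 2 <;>
        first
          | omega
          | exact Prod.ext_iff.mpr ⟨by omega, by omega⟩
          | exact Prod.ext_iff.mpr ⟨by omega, Prod.ext_iff.mpr ⟨by omega, by omega⟩⟩

lemma mem_ideals3_iff {n : ℕ} {I : Finset (ℤ × ℤ × ℤ)} :
    I ∈ ideals3 SS (V3 n) ↔ IsIdeal3 SS (V3 n) I := by
  rw [ideals3, Finset.mem_filter, Finset.mem_powerset]
  exact ⟨fun h => h.2, fun h => ⟨h.1, h⟩⟩

end TSSAux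


/-- The number of TSSCPPs inside a `2n×2n×2n` box equals the number of order
ideals of `T_n({r,g,o,y})`. -/
theorem stmt13 (n : ℕ) (hn : 1 ≤ n) :
    Nat.card {π : Set (ℕ × ℕ × ℕ) // IsTSSCPP n π} =
      (ideals3 {vr, vg, vo, vy} (V3 n)).card := by
  classical
  have E : {π : Set (ℕ × ℕ × ℕ) // IsTSSCPP n π} ≃
      {I // I ∈ ideals3 ({vr, vg, vo, vy} : Set (ℤ × ℤ × ℤ)) (V3 n)} :=
    { toFun := fun p => ⟨TSSAux.Iof n p.1, TSSAux.mem_ideals3_iff.mpr (TSSAux.Iof_ideal p.2)⟩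
      invFun := fun q => ⟨TSSAux.piI n q.1, TSSAux.tsscpp_piI (TSSAux.mem_ideals3_iff.mp q.2)⟩
      left_inv := fun p => Subtype.ext (TSSAux.recon p.2)
      right_inv := fun q => Subtype.ext (TSSAux.Iof_piI (TSSAux.mem_ideals3_iff.mp q.2)) }
  rw [Nat.card_congr E]
  exact Nat.card_eq_finsetCard _
end
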